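/- arXiv:2005.13598 — 12 statements merged into one kernel-verified Lean document; each statement's English description precedes it below -/
import Mathlib

section
/- Let P and Q be nonzero points of the lattice Z^2 ⊂ C (identified with Gaussian integers), and suppose the angle between the rays OP and OQ (O the origin) is a rational multiple of π. Then this angle is an integer multiple of π/4. -/
/-!
Write `θ = arg (Q / P)`. Since `Q / P` has rational coordinates `x, y`, both
`cos 2θ = (x² - y²) / (x² + y²)` and `sin 2θ = 2xy / (x² + y²)` are rational. As `2θ` is a
rational multiple of `π`, Niven's theorem puts both values in `{0, ±1/2, ±1}`, and
`cos² 2θ + sin² 2θ = 1` then forces `sin 4θ = 2 sin 2θ cos 2θ = 0`.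
-/

open Real

namespace Complex

lemma cos_two_mul_arg {z : ℂ} (hz : z ≠ 0) :
    Real.cos (2 * arg z) = (z.re ^ 2 - z.im ^ 2) / normSq z := by
  have hpos : 0 < z.re ^ 2 + z.im ^ 2 := by simpa [normSq_apply, sq] using normSq_pos.mpr hz
  rw [Real.cos_two_mul, cos_arg hz, div_pow, Complex.sq_norm, normSq_apply]
  field_simp
  ring

lemma sin_two_mul_arg (z : ℂ) : Real.sin (2 * arg z) = 2 * z.re * z.im / normSq z := by
  rcases eq_or_ne z 0 with rfl | hz
  · simp
  have hpos : 0 < ‖z‖ := norm_pos_iff.mpr hz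
  rw [Real.sin_two_mul, sin_arg, cos_arg hz, ← Complex.sq_norm]
  field_simp

def IsGaussianRational (z : ℂ) : Prop :=
  (∃ a : ℚ, z.re = a) ∧ ∃ b : ℚ, z.im = b

namespace IsGaussianRational

lemma of_int {z : ℂ} (hz : ∃ a b : ℤ, z = a + b * I) : IsGaussianRational z := by
  obtain ⟨a, b, rfl⟩ := hz
  exact ⟨⟨a, by simp⟩, ⟨b, by simp⟩⟩

variable {z w : ℂ}

lemma exists_rat_normSq_eq (hz : IsGaussianRational z) : ∃ r : ℚ, normSq z = r := by
  obtain ⟨⟨a, ha⟩, ⟨b, hb⟩⟩ := hz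
  exact ⟨a * a + b * b, by rw [normSq_apply, ha, hb]; push_cast; rfl⟩

lemma div (hz : IsGaussianRational z) (hw : IsGaussianRational w) :
    IsGaussianRational (z / w) := by
  obtain ⟨r, hr⟩ := hw.exists_rat_normSq_eq
  obtain ⟨⟨a, ha⟩, ⟨b, hb⟩⟩ := hz
  obtain ⟨⟨c, hc⟩, ⟨d, hd⟩⟩ := hw
  refine ⟨⟨a * c / r + b * d / r, ?_⟩, ⟨b * c / r - a * d / r, ?_⟩⟩
  · rw [div_re, ha, hb, hc, hd, hr]; push_cast; rfl
  · rw [div_im, ha, hb, hc, hd, hr]; push_cast; rfl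

lemma exists_rat_cos_two_mul_arg (hz : IsGaussianRational z) (hz0 : z ≠ 0) :
    ∃ q : ℚ, Real.cos (2 * arg z) = q := by
  obtain ⟨r, hr⟩ := hz.exists_rat_normSq_eq
  obtain ⟨⟨a, ha⟩, ⟨b, hb⟩⟩ := hz
  exact ⟨(a ^ 2 - b ^ 2) / r, by rw [cos_two_mul_arg hz0, ha, hb, hr]; push_cast; rfl⟩

lemma exists_rat_sin_two_mul_arg (hz : IsGaussianRational z) :
    ∃ q : ℚ, Real.sin (2 * arg z) = q := by
  obtain ⟨r, hr⟩ := hz.exists_rat_normSq_eq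
  obtain ⟨⟨a, ha⟩, ⟨b, hb⟩⟩ := hz
  exact ⟨2 * a * b / r, by rw [sin_two_mul_arg, ha, hb, hr]; push_cast; rfl⟩

end IsGaussianRational

end Complex

lemma exists_int_eq_mul_pi_div_two_of_rat_cos_sin {θ : ℝ} (hθ : ∃ r : ℚ, θ = r * π)
    (hcos : ∃ q : ℚ, cos θ = q) (hsin : ∃ q : ℚ, sin θ = q) :
    ∃ k : ℤ, θ = k * (π / 2) := by
  have hsc : sin θ * cos θ = 0 := by
    have := sin_sq_add_cos_sq θ
    rcases niven hθ hcos with hc | hc | hc | hc | hc <;>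
      rcases niven_sin hθ hsin with hs | hs | hs | hs | hs <;>
      grind
  have hsin_two_mul : sin (2 * θ) = 0 := by rw [sin_two_mul, mul_assoc, hsc, mul_zero]
  obtain ⟨k, hk⟩ := sin_eq_zero_iff.mp hsin_two_mul
  exact ⟨k, by linarith⟩

/-- If `P` and `Q` are nonzero Gaussian integers and the angle between the rays
`OP` and `OQ` (i.e. the argument of `Q / P`) is a rational multiple of `π`,
then this angle is an integer multiple of `π / 4`. -/
theorem rational_angles_in_gaussian_lattice
    (P Q : ℂ) (hP : P ≠ 0) (hQ : Q ≠ 0)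
    (hPint : ∃ a b : ℤ, P = (a : ℂ) + (b : ℂ) * Complex.I)
    (hQint : ∃ a b : ℤ, Q = (a : ℂ) + (b : ℂ) * Complex.I)
    (hrat : ∃ q : ℚ, Complex.arg (Q / P) = (q : ℝ) * Real.pi) :
    ∃ k : ℤ, Complex.arg (Q / P) = (k : ℝ) * (Real.pi / 4) := by
  obtain ⟨q, hq⟩ := hrat
  have hz : Complex.IsGaussianRational (Q / P) :=
    (Complex.IsGaussianRational.of_int hQint).div (.of_int hPint)
  obtain ⟨k, hk⟩ := exists_int_eq_mul_pi_div_two_of_rat_cos_sin (θ := 2 * Complex.arg (Q / P))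
    ⟨2 * q, by rw [hq]; push_cast; ring⟩ (hz.exists_rat_cos_two_mul_arg (div_ne_zero hQ hP))
    hz.exists_rat_sin_two_mul_arg
  exact ⟨k, by linarith⟩
end

section
/- If ζ = exp(2πi/5), then the element 1 + ζ² of Z[ζ] satisfies 0 < |1 + ζ²| < 1, and hence the powers (1+ζ²)^m are nonzero elements of Z[ζ] of arbitrarily small absolute value; consequently Z[exp(2πi/5)] is not contained in any lattice of C, so no regular pentagon has all vertices in a plane lattice. -/
/-- A lattice in `ℂ`: a subgroup of the form `ℤω₁ + ℤω₂` with `ω₁, ω₂`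
linearly independent over `ℝ`. -/
def IsComplexLattice (Λ : AddSubgroup ℂ) : Prop :=
  ∃ ω₁ ω₂ : ℂ, LinearIndependent ℝ ![ω₁, ω₂] ∧
    Λ = AddSubgroup.closure {ω₁, ω₂}

/-!
With `θ = 4π/5`, the identities `|1 + e^{iθ}|² = 2 + 2 cos θ` and `cos (π/5) = (1 + √5)/4` give
`|1 + ζ²| = (√5 - 1)/2 ∈ (0, 1)`, so the powers of `u = 1 + ζ² ∈ ℤ[ζ]` are nonzero and tend to `0`.
A lattice is discrete, so it contains no sequence `w uᵐ` with `w ≠ 0`. If the vertices `c + r ζᵏ`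
of a regular pentagon lay in a lattice `Λ`, then `Λ` would contain the edges `r (ζ - 1) ζᵏ`, hence
all of `r (ζ - 1) ℤ[ζ]`, and in particular `r (ζ - 1) uᵐ` for every `m`.
-/

open Complex
open scoped Real

theorem IsComplexLattice.discreteTopology {Λ : AddSubgroup ℂ} (hΛ : IsComplexLattice Λ) :
    DiscreteTopology Λ := by
  obtain ⟨ω₁, ω₂, hli, rfl⟩ := hΛ
  have hcard : Fintype.card (Fin 2) = Module.finrank ℝ ℂ := by
    simp [Complex.finrank_real_complex]
  let b := basisOfLinearIndependentOfCardEqFinrank hli hcard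
  have hb : Set.range b = {ω₁, ω₂} := by
    simp [b, Matrix.range_cons, Set.pair_comm]
  rw [← hb, ← Submodule.span_int_eq_addSubgroupClosure]
  exact inferInstanceAs (DiscreteTopology (Submodule.span ℤ (Set.range b)))

theorem IsComplexLattice.exists_pos_eq_zero_of_norm_lt {Λ : AddSubgroup ℂ}
    (hΛ : IsComplexLattice Λ) : ∃ ε > 0, ∀ z ∈ Λ, ‖z‖ < ε → z = 0 := by
  have := hΛ.discreteTopology
  obtain ⟨ε, hε, h⟩ := Metric.isOpen_singleton_iff.1 (isOpen_discrete {(0 : Λ)})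
  refine ⟨ε, hε, fun z hz hzε => ?_⟩
  simpa using h ⟨z, hz⟩ (by simpa [Subtype.dist_eq] using hzε)

theorem IsComplexLattice.not_forall_mul_pow_mem {Λ : AddSubgroup ℂ} (hΛ : IsComplexLattice Λ)
    {w u : ℂ} (hw : w ≠ 0) (hu : u ≠ 0) (hu1 : ‖u‖ < 1) : ¬ ∀ m : ℕ, w * u ^ m ∈ Λ := by
  intro hmem
  obtain ⟨ε, hε, hΛε⟩ := hΛ.exists_pos_eq_zero_of_norm_lt
  have hw_pos : 0 < ‖w‖ := norm_pos_iff.2 hw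
  obtain ⟨m, hm⟩ := exists_pow_lt_of_lt_one (div_pos hε hw_pos) hu1
  refine mul_ne_zero hw (pow_ne_zero m hu) (hΛε _ (hmem m) ?_)
  calc ‖w * u ^ m‖ = ‖w‖ * ‖u‖ ^ m := by rw [norm_mul, norm_pow]
    _ < ‖w‖ * (ε / ‖w‖) := by gcongr
    _ = ε := mul_div_cancel₀ ε hw_pos.ne'

theorem AddSubgroup.mul_mem_of_forall_mul_pow_mem {R : Type*} [Ring R] {Λ : AddSubgroup R}
    {w ζ z : R} (h : ∀ k : ℕ, w * ζ ^ k ∈ Λ) (hz : z ∈ Subring.closure {ζ}) : w * z ∈ Λ := by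
  rw [Subring.mem_closure_iff, ← Submonoid.powers_eq_closure] at hz
  have : AddSubgroup.closure (Submonoid.powers ζ : Set R) ≤ Λ.comap (AddMonoidHom.mulLeft w) :=
    (AddSubgroup.closure_le _).2 (by rintro _ ⟨k, rfl⟩; exact h k)
  exact this hz

theorem AddSubgroup.mul_sub_one_mul_pow_mem_of_forall_add_mul_pow_mem {R : Type*} [Ring R]
    {Λ : AddSubgroup R} {ζ c r : R} {n : ℕ} (hn : 0 < n) (hζ : ζ ^ n = 1)
    (h : ∀ k < n, c + r * ζ ^ k ∈ Λ) (k : ℕ) :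
    r * (ζ - 1) * ζ ^ k ∈ Λ := by
  have hvert (j : ℕ) : c + r * ζ ^ j ∈ Λ := by
    rw [pow_eq_pow_mod j hζ]
    exact h _ (Nat.mod_lt j hn)
  have hedge : r * (ζ - 1) * ζ ^ k = (c + r * ζ ^ (k + 1)) - (c + r * ζ ^ k) := by
    rw [pow_succ']; noncomm_ring
  rw [hedge]
  exact sub_mem (hvert _) (hvert _)

theorem Complex.sq_norm_one_add_exp_mul_I (θ : ℝ) :
    ‖1 + exp (θ * I)‖ ^ 2 = 2 + 2 * Real.cos θ := by
  rw [Complex.sq_norm, exp_mul_I, ← ofReal_cos, ← ofReal_sin, ← add_assoc, ← ofReal_one,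
    ← ofReal_add, normSq_add_mul_I]
  nlinarith [Real.sin_sq_add_cos_sq θ]

theorem Complex.norm_one_add_exp_two_pi_I_div_five_sq :
    ‖1 + exp (2 * π * I / 5) ^ 2‖ = (√5 - 1) / 2 := by
  have hpow : exp (2 * π * I / 5) ^ 2 = exp ((4 * π / 5 : ℝ) * I) := by
    rw [← exp_nat_mul]; push_cast; ring_nf
  have hcos : Real.cos (4 * π / 5) = - ((1 + √5) / 4) := by
    rw [show 4 * π / 5 = π - π / 5 by ring, Real.cos_pi_sub, Real.cos_pi_div_five]
  have h5 : √5 ^ 2 = 5 := Real.sq_sqrt (by norm_num)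
  have h1 : 1 ≤ √5 := Real.one_le_sqrt.2 (by norm_num)
  rw [← sq_eq_sq₀ (norm_nonneg _) (by linarith), hpow, sq_norm_one_add_exp_mul_I, hcos]
  nlinarith

/-- For `ζ = exp(2πi/5)` one has `0 < |1 + ζ²| < 1`, hence the powers `(1 + ζ²)^m`
are nonzero elements of `ℤ[ζ]` of arbitrarily small absolute value; consequently
`ℤ[ζ]` is contained in no lattice of `ℂ`, so no regular pentagon has all its
vertices in a plane lattice. -/
theorem pentagon_not_in_lattice :
    ∀ ζ : ℂ, ζ = Complex.exp (2 * Real.pi * Complex.I / 5) →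
    (0 < ‖1 + ζ ^ 2‖ ∧ ‖1 + ζ ^ 2‖ < 1) ∧
    (∀ m : ℕ, (1 + ζ ^ 2) ^ m ∈ Subring.closure {ζ} ∧ (1 + ζ ^ 2) ^ m ≠ 0) ∧
    (∀ ε : ℝ, 0 < ε → ∃ z ∈ Subring.closure {ζ}, z ≠ 0 ∧ ‖z‖ < ε) ∧
    (∀ Λ : AddSubgroup ℂ, IsComplexLattice Λ →
      ¬ ((Subring.closure {ζ} : Set ℂ) ⊆ (Λ : Set ℂ))) ∧
    (∀ Λ : AddSubgroup ℂ, IsComplexLattice Λ → ∀ c r : ℂ, r ≠ 0 →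
      ¬ (∀ k : ℕ, k < 5 → c + r * ζ ^ k ∈ Λ)) := by
  intro ζ hζ
  have hprim : IsPrimitiveRoot ζ 5 := by
    subst hζ
    exact_mod_cast Complex.isPrimitiveRoot_exp 5 (by norm_num)
  have hu0 : 0 < ‖1 + ζ ^ 2‖ := by
    rw [hζ, norm_one_add_exp_two_pi_I_div_five_sq, div_pos_iff_of_pos_right two_pos, sub_pos,
      Real.lt_sqrt] <;> norm_num
  have hu1 : ‖1 + ζ ^ 2‖ < 1 := by
    rw [hζ, norm_one_add_exp_two_pi_I_div_five_sq, div_lt_one two_pos, sub_lt_iff_lt_add,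
      Real.sqrt_lt'] <;> norm_num
  have hu : 1 + ζ ^ 2 ≠ 0 := norm_pos_iff.1 hu0
  have hmem : 1 + ζ ^ 2 ∈ Subring.closure {ζ} :=
    add_mem (one_mem _) (pow_mem (Subring.subset_closure (Set.mem_singleton ζ)) 2)
  refine ⟨⟨hu0, hu1⟩, fun m => ⟨pow_mem hmem m, pow_ne_zero m hu⟩, ?_, ?_, ?_⟩
  · intro ε hε
    obtain ⟨m, hm⟩ := exists_pow_lt_of_lt_one hε hu1
    exact ⟨_, pow_mem hmem m, pow_ne_zero m hu, by rwa [norm_pow]⟩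
  · intro Λ hΛ hsub
    exact hΛ.not_forall_mul_pow_mem one_ne_zero hu hu1 fun m => by
      simpa using hsub (pow_mem hmem m)
  · intro Λ hΛ c r hr hvert
    have hw : r * (ζ - 1) ≠ 0 := mul_ne_zero hr (sub_ne_zero.2 (hprim.ne_one (by norm_num)))
    have hedges := AddSubgroup.mul_sub_one_mul_pow_mem_of_forall_add_mul_pow_mem
      (by norm_num) hprim.pow_eq_one hvert
    exact hΛ.not_forall_mul_pow_mem hw hu hu1 fun m =>
      AddSubgroup.mul_mem_of_forall_mul_pow_mem hedges (pow_mem hmem m)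
end

section
/- The only rational angles occurring in the Eisenstein lattice Z + Zω (ω = exp(πi/3)) are integer multiples of π/6. More precisely, if P, Q are nonzero elements of the lattice and the argument of Q/P is a rational multiple of π, then it is an integer multiple of π/6. -/
/-!
If `θ = arg (Q / P)` is a rational multiple of `π`, then `w = exp (2θi) = z / conj z`
(`z = Q / P`) is a root of unity lying in `ℚ(√-3)`. Its trace `w + conj w` is a rational
algebraic integer of absolute value at most `2`, so `w² - m w + 1 = 0` for an integer `m` with
`|m| ≤ 2`; `m = 0` would give `w = ±i`, making `3` a rational square. In the remaining cases
`w⁶ = 1`, i.e. `12θ ∈ 2πℤ`.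
-/

open Complex ComplexConjugate

noncomputable def sqrtNegThree : ℂ := (Real.sqrt 3 : ℂ) * I

lemma sqrtNegThree_sq : sqrtNegThree ^ 2 = -3 := by
  rw [sqrtNegThree, mul_pow, ← ofReal_pow, Real.sq_sqrt (by norm_num), I_sq]
  push_cast; ring

lemma conj_sqrtNegThree : conj sqrtNegThree = -sqrtNegThree := by
  simp [sqrtNegThree]

lemma exp_pi_mul_I_div_three : exp (Real.pi * I / 3) = 1 / 2 + 1 / 2 * sqrtNegThree := by
  rw [show (Real.pi * I / 3 : ℂ) = (Real.pi / 3 : ℝ) * I by push_cast; ring, exp_mul_I,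
    ← ofReal_cos, ← ofReal_sin, Real.cos_pi_div_three, Real.sin_pi_div_three, sqrtNegThree]
  push_cast; ring

/-- `ℚ(√-3) = ℚ(ω)`, the fraction field of the Eisenstein lattice. -/
noncomputable def eisensteinField : Subfield ℂ where
  carrier := {z | ∃ x y : ℚ, z = x + y * sqrtNegThree}
  zero_mem' := ⟨0, 0, by simp⟩
  one_mem' := ⟨1, 0, by simp⟩
  add_mem' := by
    rintro _ _ ⟨x, y, rfl⟩ ⟨x', y', rfl⟩
    exact ⟨x + x', y + y', by push_cast; ring⟩
  neg_mem' := by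
    rintro _ ⟨x, y, rfl⟩
    exact ⟨-x, -y, by push_cast; ring⟩
  mul_mem' := by
    rintro _ _ ⟨x, y, rfl⟩ ⟨x', y', rfl⟩
    exact ⟨x * x' - 3 * y * y', x * y' + x' * y, by
      push_cast; linear_combination y * y' * sqrtNegThree_sq⟩
  inv_mem' := by
    rintro _ ⟨x, y, rfl⟩
    by_cases hN : x ^ 2 + 3 * y ^ 2 = 0
    · obtain ⟨rfl, rfl⟩ : x = 0 ∧ y = 0 := by constructor <;> nlinarith
      exact ⟨0, 0, by simp⟩
    · refine ⟨x / (x ^ 2 + 3 * y ^ 2), -y / (x ^ 2 + 3 * y ^ 2), ?_⟩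
      have hN' : ((x ^ 2 + 3 * y ^ 2 : ℚ) : ℂ) ≠ 0 := by exact_mod_cast hN
      have hnorm : ((x : ℂ) + y * sqrtNegThree) * (x - y * sqrtNegThree) =
          (x ^ 2 + 3 * y ^ 2 : ℚ) := by
        push_cast
        linear_combination -(y : ℂ) ^ 2 * sqrtNegThree_sq
      refine inv_eq_of_mul_eq_one_right ?_
      calc _ = ((x : ℂ) + y * sqrtNegThree) * (x - y * sqrtNegThree) /
              (x ^ 2 + 3 * y ^ 2 : ℚ) := by push_cast; ring
        _ = 1 := by rw [hnorm, div_self hN']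

lemma conj_mem_eisensteinField {z : ℂ} (hz : z ∈ eisensteinField) :
    conj z ∈ eisensteinField := by
  obtain ⟨x, y, rfl⟩ := hz
  exact ⟨x, -y, by simp [conj_sqrtNegThree]⟩

lemma intCast_add_intCast_mul_exp_pi_mul_I_div_three_mem (a b : ℤ) :
    (a : ℂ) + b * exp (Real.pi * I / 3) ∈ eisensteinField := by
  refine add_mem (intCast_mem _ a) (mul_mem (intCast_mem _ b) ⟨1 / 2, 1 / 2, ?_⟩)
  rw [exp_pi_mul_I_div_three]
  push_cast; ring

lemma isIntegral_of_pow_eq_one {A : Type*} [CommRing A] {w : A} {n : ℕ} (hn : n ≠ 0)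
    (h : w ^ n = 1) : IsIntegral ℤ w :=
  ⟨Polynomial.X ^ n - 1, Polynomial.monic_X_pow_sub_C 1 hn, by simp [h]⟩

lemma exists_intCast_eq_of_isIntegral {K : Type*} [Field K] [CharZero K] {q : ℚ}
    (h : IsIntegral ℤ (q : K)) : ∃ m : ℤ, (m : ℚ) = q := by
  rw [← eq_ratCast (algebraMap ℚ K),
    isIntegral_algebraMap_iff (algebraMap ℚ K).injective] at h
  exact IsIntegrallyClosed.isIntegral_iff.mp h

lemma pow_six_eq_one_of_sq_sub_mul_add_one {R : Type*} [CommRing R] [NoZeroDivisors R]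
    {w : R} {m : ℤ} (hm₀ : m ≠ 0) (hm : |m| ≤ 2) (h : w ^ 2 - m * w + 1 = 0) :
    w ^ 6 = 1 := by
  obtain ⟨hm₁, hm₂⟩ := abs_le.mp hm
  interval_cases m
  · have : (w + 1) ^ 2 = 0 := by linear_combination h
    rw [eq_neg_of_add_eq_zero_left (pow_eq_zero_iff two_ne_zero |>.mp this)]
    norm_num
  · linear_combination (w - 1) * (w ^ 3 + 1) * h
  · exact absurd rfl hm₀
  · linear_combination (w + 1) * (w ^ 3 - 1) * h
  · have : (w - 1) ^ 2 = 0 := by linear_combination h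
    rw [sub_eq_zero.mp (pow_eq_zero_iff two_ne_zero |>.mp this)]
    norm_num

lemma pow_six_eq_one_of_mem_eisensteinField {w : ℂ} (hw : w ∈ eisensteinField) {n : ℕ}
    (hn : n ≠ 0) (h : w ^ n = 1) : w ^ 6 = 1 := by
  obtain ⟨x, y, rfl⟩ := hw
  have hconj : conj ((x : ℂ) + y * sqrtNegThree) = x - y * sqrtNegThree := by
    simp [conj_sqrtNegThree, sub_eq_add_neg]
  have hnormC : (x : ℂ) ^ 2 + 3 * y ^ 2 = 1 := by
    have h1 := mul_conj' ((x : ℂ) + y * sqrtNegThree)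
    rw [norm_eq_one_of_pow_eq_one h hn, hconj, ofReal_one, one_pow] at h1
    linear_combination h1 + (y : ℂ) ^ 2 * sqrtNegThree_sq
  have hnorm : x ^ 2 + 3 * y ^ 2 = 1 := by exact_mod_cast hnormC
  -- `2x` is the trace `w + conj w` of an algebraic integer
  obtain ⟨m, hm⟩ : ∃ m : ℤ, (m : ℚ) = 2 * x := by
    refine exists_intCast_eq_of_isIntegral (K := ℂ) ?_
    have hconj_pow : conj ((x : ℂ) + y * sqrtNegThree) ^ n = 1 := by
      rw [← map_pow, h, map_one]
    have hint := (isIntegral_of_pow_eq_one hn h).add (isIntegral_of_pow_eq_one hn hconj_pow)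
    rwa [hconj, show (x : ℂ) + y * sqrtNegThree + (x - y * sqrtNegThree) = ((2 * x : ℚ) : ℂ)
      by push_cast; ring] at hint
  have hm₀ : m ≠ 0 := by
    rintro rfl
    obtain rfl : x = 0 := by push_cast at hm; linarith
    have hsq : IsSquare (3 : ℚ) := ⟨3 * y, by nlinarith⟩
    rw [Rat.isSquare_ofNat_iff] at hsq
    exact absurd hsq (by decide +kernel)
  have hm₂ : |m| ≤ 2 := by
    have : ((|m| : ℤ) : ℚ) ≤ 2 := by
      rw [Int.cast_abs, abs_le, hm]
      constructor <;> nlinarith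
    exact_mod_cast this
  refine pow_six_eq_one_of_sq_sub_mul_add_one hm₀ hm₂ ?_
  have hmC : (m : ℂ) = 2 * x := by exact_mod_cast hm
  rw [hmC]
  linear_combination (y : ℂ) ^ 2 * sqrtNegThree_sq - hnormC

lemma exp_two_mul_arg_mul_I {z : ℂ} (hz : z ≠ 0) : exp (2 * arg z * I) = z / conj z := by
  conv_rhs => rw [← norm_mul_exp_arg_mul_I z]
  rw [map_mul, ← exp_conj, conj_ofReal, map_mul, conj_ofReal, conj_I,
    mul_div_mul_left _ _ (by simpa using hz), ← exp_sub]
  ring_nf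

lemma exp_two_mul_ratCast_mul_pi_mul_I_pow_den (q : ℚ) :
    exp (2 * ((q * Real.pi : ℝ) : ℂ) * I) ^ q.den = 1 := by
  rw [← exp_nat_mul, ← exp_int_mul_two_pi_mul_I q.num]
  congr 1
  have : (q : ℂ) * q.den = q.num := by exact_mod_cast Rat.mul_den_eq_num q
  push_cast
  linear_combination 2 * Real.pi * I * this

lemma exists_int_eq_mul_pi_div_six_of_exp_pow_six {θ : ℝ} (h : exp (2 * θ * I) ^ 6 = 1) :
    ∃ k : ℤ, θ = k * (Real.pi / 6) := by
  rw [← exp_nat_mul, exp_eq_one_iff] at h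
  obtain ⟨k, hk⟩ := h
  refine ⟨k, ?_⟩
  have : ((12 * θ : ℝ) : ℂ) = (k * (2 * Real.pi) : ℝ) := by
    push_cast
    linear_combination -I * hk + (12 * θ - 2 * k * Real.pi) * I_sq
  have : 12 * θ = k * (2 * Real.pi) := by exact_mod_cast this
  linarith

theorem rational_angles_in_eisenstein_lattice_general
    (P Q : ℂ)
    (hPlat : ∃ a b : ℤ, P = (a : ℂ) + (b : ℂ) * Complex.exp (Real.pi * Complex.I / 3))
    (hQlat : ∃ a b : ℤ, Q = (a : ℂ) + (b : ℂ) * Complex.exp (Real.pi * Complex.I / 3))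
    (hrat : ∃ q : ℚ, Complex.arg (Q / P) = (q : ℝ) * Real.pi) :
    ∃ k : ℤ, Complex.arg (Q / P) = (k : ℝ) * (Real.pi / 6) := by
  obtain ⟨q, hq⟩ := hrat
  rcases eq_or_ne (Q / P) 0 with h0 | hz
  · exact ⟨0, by simp [h0]⟩
  have hzK : Q / P ∈ eisensteinField := by
    obtain ⟨a, b, rfl⟩ := hPlat
    obtain ⟨c, d, rfl⟩ := hQlat
    exact div_mem (intCast_add_intCast_mul_exp_pi_mul_I_div_three_mem c d)
      (intCast_add_intCast_mul_exp_pi_mul_I_div_three_mem a b)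
  have hwK : exp (2 * arg (Q / P) * I) ∈ eisensteinField := by
    rw [exp_two_mul_arg_mul_I hz]
    exact div_mem hzK (conj_mem_eisensteinField hzK)
  have hw : exp (2 * arg (Q / P) * I) ^ q.den = 1 := by
    rw [hq]
    exact exp_two_mul_ratCast_mul_pi_mul_I_pow_den q
  exact exists_int_eq_mul_pi_div_six_of_exp_pow_six
    (pow_six_eq_one_of_mem_eisensteinField hwK q.den_ne_zero hw)

open Complex in
/-- In the Eisenstein lattice `ℤ + ℤω`, `ω = exp(πi/3)`, every rational angle is an
integer multiple of `π / 6`: if `P`, `Q` are nonzero lattice elements and the argument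
of `Q / P` is a rational multiple of `π`, then it is an integer multiple of `π / 6`. -/
theorem rational_angles_in_eisenstein_lattice
    (P Q : ℂ) (hP : P ≠ 0) (hQ : Q ≠ 0)
    (hPlat : ∃ a b : ℤ, P = (a : ℂ) + (b : ℂ) * Complex.exp (Real.pi * Complex.I / 3))
    (hQlat : ∃ a b : ℤ, Q = (a : ℂ) + (b : ℂ) * Complex.exp (Real.pi * Complex.I / 3))
    (hrat : ∃ q : ℚ, Complex.arg (Q / P) = (q : ℝ) * Real.pi) :
    ∃ k : ℤ, Complex.arg (Q / P) = (k : ℝ) * (Real.pi / 6) :=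
  rational_angles_in_eisenstein_lattice_general P Q hPlat hQlat hrat
end

section
/- Let V ⊂ C be a 2-dimensional Q-vector subspace containing two R-linearly independent vectors. The following are equivalent: (i) V is homothetic to Q·1 + Q·τ with |τ| = 1, τ ∉ R; (ii) V is homothetic to Q·1 + Q·τ with τ a nonzero purely imaginary number; (iii) V is homothetic to a space V′ satisfying V′ = conj(V′). -/
/-!
For `1 + τ ≠ 0`, the identity `ℚ·1 + ℚ·τ = ℚ·(1 + τ) + ℚ·(1 - τ)` shows that multiplication by
`(1 + τ)⁻¹` carries `ℚ·1 + ℚ·τ` onto `ℚ·1 + ℚ·κ(τ)`, where `κ(τ) = (1 - τ) / (1 + τ)` is the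
Cayley transform. It is an involution exchanging the unit circle with the imaginary axis and
preserving non-reality, whence (i) ⇔ (ii). A space `ℚ·1 + ℚ·it` is visibly conjugation-stable.
Conversely, a conjugation-stable space `V'` contains `z + z̄ = 2 Re z` and `z - z̄ = 2i Im z` for
each of its elements; since `V'` spans `ℂ` over `ℝ` it thus contains a nonzero real `r` and a
nonzero imaginary number, which span `V'` over `ℚ` for dimension reasons, and dividing by `r`
gives (ii).
-/

open Complex Module Submodule
open scoped Pointwise ComplexConjugate

namespace Submodule

lemma span_pair_eq_span_add_sub {K M : Type*} [DivisionRing K] [NeZero (2 : K)]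
    [AddCommGroup M] [Module K M] (a b : M) :
    span K {a + b, a - b} = span K {a, b} := by
  have half_two (x : M) : (2 : K)⁻¹ • (x + x) = x := by
    rw [← two_smul K x, smul_smul, inv_mul_cancel₀ two_ne_zero, one_smul]
  refine le_antisymm (span_le.2 (Set.pair_subset ?_ ?_)) (span_le.2 (Set.pair_subset ?_ ?_))
  · exact add_mem (subset_span (by simp)) (subset_span (by simp))
  · exact sub_mem (subset_span (by simp)) (subset_span (by simp))
  · refine mem_span_pair.2 ⟨2⁻¹, 2⁻¹, ?_⟩
    rw [← smul_add, add_add_sub_cancel, half_two]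
  · refine mem_span_pair.2 ⟨2⁻¹, -2⁻¹, ?_⟩
    rw [neg_smul, ← sub_eq_add_neg, ← smul_sub, add_sub_sub_cancel, half_two]

lemma span_pair_eq_of_finrank_eq_two {K M : Type*} [DivisionRing K] [AddCommGroup M]
    [Module K M] {W : Submodule K M} (hW : finrank K W = 2) {a b : M} (ha : a ∈ W) (hb : b ∈ W)
    (hab : LinearIndependent K ![a, b]) : span K {a, b} = W := by
  have : FiniteDimensional K W := .of_finrank_pos (by omega)
  refine eq_of_le_of_finrank_eq (span_le.2 (Set.pair_subset ha hb)) ?_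
  rw [hW, ← Matrix.range_cons_cons_empty, finrank_span_eq_card hab, Fintype.card_fin]

lemma smul_span_pair {α R M : Type*} [Semiring R] [AddCommMonoid M] [Module R M]
    [Monoid α] [DistribMulAction α M] [SMulCommClass α R M] (c : α) (a b : M) :
    c • span R {a, b} = span R {c • a, c • b} := by
  rw [smul_span, Set.smul_set_insert, Set.smul_set_singleton]

lemma image_mul_eq_iff_smul_eq {R A : Type*} [CommSemiring R] [CommSemiring A]
    [Algebra R A] (l : A) (V W : Submodule R A) :
    (fun z : A => l * z) '' (V : Set A) = W ↔ l • V = W := by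
  rw [← SetLike.coe_set_eq (p := l • V), coe_pointwise_smul, ← Set.image_smul]
  rfl

lemma finrank_smul_of_ne_zero {G K M : Type*} [DivisionRing K] [AddCommGroup M]
    [Module K M] [GroupWithZero G] [DistribMulAction G M] [SMulCommClass G K M] {l : G}
    (hl : l ≠ 0) (V : Submodule K M) : finrank K (l • V : Submodule K M) = finrank K V :=
  LinearEquiv.finrank_map_eq (DistribMulAction.toLinearEquiv K M (Units.mk0 l hl)) V

end Submodule

lemma RingHom.image_span_rat {R S : Type*} [Ring R] [Ring S] [Algebra ℚ R] [Algebra ℚ S]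
    (f : R →+* S) (s : Set R) : f '' (span ℚ s : Set R) = span ℚ (f '' s) :=
  (map_coe _ _).symm.trans (congrArg SetLike.coe (map_span f.toRatAlgHom.toLinearMap s))

lemma LinearIndependent.pair_mul_left {K A : Type*} [CommRing K] [Ring A] [NoZeroDivisors A]
    [Algebra K A] {l v w : A} (hl : l ≠ 0) (h : LinearIndependent K ![v, w]) :
    LinearIndependent K ![l * v, l * w] := by
  refine LinearIndependent.pair_iff.2 fun s t hst => LinearIndependent.pair_iff.1 h s t ?_
  rw [← mul_smul_comm, ← mul_smul_comm, ← mul_add] at hst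
  exact (mul_eq_zero.1 hst).resolve_left hl

lemma LinearIndependent.re_ne_zero_or_re_ne_zero {v w : ℂ}
    (h : LinearIndependent ℝ ![v, w]) : v.re ≠ 0 ∨ w.re ≠ 0 := by
  by_contra! ⟨hv, hw⟩
  have hcoeff := LinearIndependent.pair_iff.1 h w.im (-v.im)
    (Complex.ext (by simp [hv, hw]) (by simp [mul_comm]))
  exact h.ne_zero 0 (Complex.ext hv (neg_eq_zero.1 hcoeff.2))

namespace Complex

lemma forall_ne_ofReal_iff_im_ne_zero {z : ℂ} : (∀ r : ℝ, z ≠ r) ↔ z.im ≠ 0 :=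
  ⟨fun h him => h z.re (Complex.ext rfl him), fun h r hr => h (by simp [hr])⟩

lemma one_add_ne_zero_of_im_ne_zero {z : ℂ} (h : z.im ≠ 0) : 1 + z ≠ 0 :=
  fun h0 => h (by simpa using congrArg im h0)

lemma linearIndependent_ofReal_ofReal_mul_I {r t : ℝ} (hr : r ≠ 0) (ht : t ≠ 0) :
    LinearIndependent ℚ ![(r : ℂ), t * I] := by
  refine LinearIndependent.pair_iff.2 fun p q h => ⟨?_, ?_⟩
  · simpa [hr] using congrArg re h
  · simpa [ht] using congrArg im h

noncomputable def cayley (τ : ℂ) : ℂ := (1 - τ) / (1 + τ)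

section Cayley

variable {τ : ℂ}

lemma one_add_cayley (h : 1 + τ ≠ 0) : 1 + cayley τ = 2 / (1 + τ) := by
  rw [cayley]; field_simp; ring

lemma one_add_cayley_ne_zero (h : 1 + τ ≠ 0) : 1 + cayley τ ≠ 0 := by
  rw [one_add_cayley h]; exact div_ne_zero two_ne_zero h

lemma cayley_cayley (h : 1 + τ ≠ 0) : cayley (cayley τ) = τ := by
  rw [cayley, one_add_cayley h, cayley]; field_simp; ring

lemma cayley_re (τ : ℂ) : (cayley τ).re = (1 - normSq τ) / normSq (1 + τ) := by
  rw [cayley, div_re, normSq_apply, normSq_apply]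
  simp only [sub_re, one_re, add_re, add_im, one_im, zero_add, sub_im, zero_sub, neg_mul]
  ring

lemma cayley_im (τ : ℂ) : (cayley τ).im = -2 * τ.im / normSq (1 + τ) := by
  rw [cayley, div_im]
  simp only [sub_im, one_im, zero_sub, add_re, one_re, neg_mul, sub_re, add_im, zero_add]
  ring

lemma cayley_re_eq_zero_iff (h : 1 + τ ≠ 0) : (cayley τ).re = 0 ↔ ‖τ‖ = 1 := by
  rw [cayley_re, div_eq_zero_iff, or_iff_left (normSq_pos.2 h).ne', sub_eq_zero, eq_comm,
    normSq_eq_norm_sq, pow_eq_one_iff_of_nonneg (norm_nonneg τ) two_ne_zero]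

lemma cayley_im_eq_zero_iff (h : 1 + τ ≠ 0) : (cayley τ).im = 0 ↔ τ.im = 0 := by
  rw [cayley_im, div_eq_zero_iff, or_iff_left (normSq_pos.2 h).ne']; simp

lemma norm_cayley_eq_one_iff (h : 1 + τ ≠ 0) : ‖cayley τ‖ = 1 ↔ τ.re = 0 := by
  rw [← cayley_re_eq_zero_iff (one_add_cayley_ne_zero h), cayley_cayley h]

lemma smul_span_one_cayley (h : 1 + τ ≠ 0) :
    (1 + τ)⁻¹ • span ℚ {1, τ} = span ℚ {1, cayley τ} := by
  rw [← span_pair_eq_span_add_sub, smul_span_pair, smul_eq_mul, smul_eq_mul,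
    inv_mul_cancel₀ h, inv_mul_eq_div, cayley]

end Cayley

lemma image_conj_span_one_of_re_eq_zero {τ : ℂ} (hτ : τ.re = 0) :
    (fun z : ℂ => conj z) '' (span ℚ {1, τ} : Set ℂ) = span ℚ {1, τ} := by
  have hconj : conj τ = -τ := Complex.ext (by simp [hτ]) (by simp)
  rw [(starRingEnd ℂ).image_span_rat, Set.image_pair, map_one, hconj, span_insert,
    ← Set.neg_singleton, span_neg, ← span_insert]

lemma exists_span_ofReal_ofReal_mul_I_eq {W : Submodule ℚ ℂ} (hW : finrank ℚ W = 2)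
    (hconj : ∀ z ∈ W, conj z ∈ W) {v w : ℂ} (hv : v ∈ W) (hw : w ∈ W)
    (hvw : LinearIndependent ℝ ![v, w]) :
    ∃ r t : ℝ, r ≠ 0 ∧ t ≠ 0 ∧ span ℚ {(r : ℂ), t * I} = W := by
  obtain ⟨z, hz, hzre⟩ : ∃ z ∈ W, z.re ≠ 0 :=
    hvw.re_ne_zero_or_re_ne_zero.elim (⟨v, hv, ·⟩) (⟨w, hw, ·⟩)
  obtain ⟨y, hy, hyim⟩ : ∃ y ∈ W, y.im ≠ 0 := by
    have := (hvw.pair_mul_left I_ne_zero).re_ne_zero_or_re_ne_zero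
    simp only [I_mul_re, neg_ne_zero] at this
    exact this.elim (⟨v, hv, ·⟩) (⟨w, hw, ·⟩)
  have hr : 2 * z.re ≠ 0 := mul_ne_zero two_ne_zero hzre
  have ht : 2 * y.im ≠ 0 := mul_ne_zero two_ne_zero hyim
  refine ⟨2 * z.re, 2 * y.im, hr, ht, span_pair_eq_of_finrank_eq_two hW ?_ ?_
    (linearIndependent_ofReal_ofReal_mul_I hr ht)⟩
  · exact add_conj z ▸ add_mem hz (hconj z hz)
  · exact sub_conj y ▸ sub_mem hy (hconj y hy)

lemma exists_smul_eq_span_one_of_conj_mem {W : Submodule ℚ ℂ} (hW : finrank ℚ W = 2)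
    (hconj : ∀ z ∈ W, conj z ∈ W) {v w : ℂ} (hv : v ∈ W) (hw : w ∈ W)
    (hvw : LinearIndependent ℝ ![v, w]) :
    ∃ c τ : ℂ, c ≠ 0 ∧ τ ≠ 0 ∧ τ.re = 0 ∧ c • W = span ℚ {1, τ} := by
  obtain ⟨r, t, hr, ht, hspan⟩ := exists_span_ofReal_ofReal_mul_I_eq hW hconj hv hw hvw
  have hr' : (r : ℂ) ≠ 0 := ofReal_ne_zero.2 hr
  refine ⟨(r : ℂ)⁻¹, (t / r : ℝ) * I, inv_ne_zero hr',
    mul_ne_zero (ofReal_ne_zero.2 (div_ne_zero ht hr)) I_ne_zero, by simp, ?_⟩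
  rw [← hspan, smul_span_pair, smul_eq_mul, smul_eq_mul, inv_mul_cancel₀ hr', ofReal_div,
    ← mul_assoc, inv_mul_eq_div]

end Complex

/-- For a space `V` (a 2-dimensional `ℚ`-subspace of `ℂ` containing two
`ℝ`-linearly independent vectors) the following are equivalent:
(i) `V` is homothetic to `ℚ·1 + ℚ·τ` with `|τ| = 1`, `τ ∉ ℝ`;
(ii) `V` is homothetic to `ℚ·1 + ℚ·τ` with `τ` purely imaginary and nonzero;
(iii) `V` is homothetic to a space `V'` with `V' = conj(V')`. -/
theorem selfconjugate_space_characterization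
    (V : Submodule ℚ ℂ) (hdim : Module.finrank ℚ V = 2)
    (hind : ∃ v w : ℂ, v ∈ V ∧ w ∈ V ∧ LinearIndependent ℝ ![v, w]) :
    List.TFAE
      [ ∃ l τ : ℂ, l ≠ 0 ∧ ‖τ‖ = 1 ∧ (∀ r : ℝ, τ ≠ (r : ℂ)) ∧
          (fun z : ℂ => l * z) '' (V : Set ℂ) = (Submodule.span ℚ {1, τ} : Set ℂ),
        ∃ l τ : ℂ, l ≠ 0 ∧ τ ≠ 0 ∧ τ.re = 0 ∧
          (fun z : ℂ => l * z) '' (V : Set ℂ) = (Submodule.span ℚ {1, τ} : Set ℂ),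
        ∃ (l : ℂ) (V' : Submodule ℚ ℂ), l ≠ 0 ∧
          (fun z : ℂ => l * z) '' (V : Set ℂ) = (V' : Set ℂ) ∧
          (fun z : ℂ => starRingEnd ℂ z) '' (V' : Set ℂ) = (V' : Set ℂ) ] := by
  simp only [image_mul_eq_iff_smul_eq, forall_ne_ofReal_iff_im_ne_zero]
  tfae_have 1 → 2 := by
    rintro ⟨l, τ, hl, hτ, hτim, hV⟩
    have h1 := one_add_ne_zero_of_im_ne_zero hτim
    exact ⟨(1 + τ)⁻¹ * l, cayley τ, mul_ne_zero (inv_ne_zero h1) hl,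
      fun h0 => hτim ((cayley_im_eq_zero_iff h1).1 (by simp [h0])),
      (cayley_re_eq_zero_iff h1).2 hτ, by rw [mul_smul, hV, smul_span_one_cayley h1]⟩
  tfae_have 2 → 1 := by
    rintro ⟨l, τ, hl, hτ0, hτre, hV⟩
    have hτim : τ.im ≠ 0 := fun h0 => hτ0 (Complex.ext hτre h0)
    have h1 := one_add_ne_zero_of_im_ne_zero hτim
    exact ⟨(1 + τ)⁻¹ * l, cayley τ, mul_ne_zero (inv_ne_zero h1) hl,
      (norm_cayley_eq_one_iff h1).2 hτre, mt (cayley_im_eq_zero_iff h1).1 hτim,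
      by rw [mul_smul, hV, smul_span_one_cayley h1]⟩
  tfae_have 2 → 3 := fun ⟨l, τ, hl, _, hτre, hV⟩ =>
    ⟨l, span ℚ {1, τ}, hl, hV, image_conj_span_one_of_re_eq_zero hτre⟩
  tfae_have 3 → 2 := by
    rintro ⟨l, _, hl, rfl, hconj⟩
    obtain ⟨v, w, hv, hw, hvw⟩ := hind
    obtain ⟨c, τ, hc, hτ0, hτre, hW⟩ := exists_smul_eq_span_one_of_conj_mem
      ((finrank_smul_of_ne_zero hl V).trans hdim)
      (fun z hz => hconj.subset (Set.mem_image_of_mem _ hz))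
      (smul_mem_pointwise_smul v l V hv) (smul_mem_pointwise_smul w l V hw) (hvw.pair_mul_left hl)
    exact ⟨c * l, τ, mul_ne_zero hc hl, hτ0, hτre, by rw [mul_smul, hW]⟩
  tfae_finish
end

section
/- Let τ ∈ C be transcendental with |τ|² = 2. Then the space V = Q·1 + Q·τ is homothetic to its complex conjugate, but V is NOT homothetic to any space Q·1 + Q·ω with |ω| = 1. Equivalently: there are no rationals a, b, c, d and transcendental ω with |ω| = 1 such that τ = (a + bω)/(c + dω) with (c,d) ≠ (0,0). -/
/-!
Multiplication by `conj τ` sends the basis `1, τ` to `conj τ, |τ|² = 2`, which spans the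
conjugate space. Conversely, if `l • V = ℚ + ℚω` with `|ω| = 1`, write `l = c + dω` and
`lτ = a + bω`. Since `τ ∈ ℚ(ω)`, `ω` is transcendental, so `Re ω` is irrational (otherwise
`ω` is a root of `X² - 2 Re ω X + 1`). Expanding `|a + bω|² = 2 |c + dω|²` as a polynomial of
degree one in `Re ω` gives `a² + b² = 2(c² + d²)` and `ab = 2cd`, hence `(a ± b)² = 2(c ± d)²`,
and `c = d = 0` because `2` is not a rational square; so `l = 0`.
-/

open Complex ComplexConjugate Polynomial Submodule

theorem LinearMap.image_span_pair {R M N : Type*} [Semiring R] [AddCommMonoid M]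
    [AddCommMonoid N] [Module R M] [Module R N] (f : M →ₗ[R] N) (x y : M) :
    f '' (span R {x, y} : Set M) = span R {f x, f y} := by
  rw [← map_coe, map_span, Set.image_pair]

theorem Submodule.span_pair_smul_right {R M : Type*} [Semiring R] [AddCommMonoid M] [Module R M]
    {r : R} (hr : IsUnit r) (x y : M) : span R {x, r • y} = span R {x, y} := by
  rw [span_insert, span_singleton_smul_eq hr, ← span_insert]

theorem Complex.image_conj_mul_span_one_pair {z : ℂ} {q : ℚ} (hq : q ≠ 0) (hz : normSq z = q) :
    (fun w : ℂ => conj z * w) '' (span ℚ {1, z} : Set ℂ) =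
      (fun w : ℂ => conj w) '' (span ℚ {1, z} : Set ℂ) := by
  have hmul := (LinearMap.mulLeft ℚ (conj z)).image_span_pair 1 z
  have hconj := (starRingEnd ℂ).toRatAlgHom.toLinearMap.image_span_pair 1 z
  have hnorm : conj z * z = q • (1 : ℂ) := by
    rw [← normSq_eq_conj_mul_self, hz, Rat.smul_def, mul_one, ofReal_ratCast]
  simp only [LinearMap.mulLeft_apply, mul_one, hnorm, span_pair_smul_right hq.isUnit] at hmul
  simp only [AlgHom.toLinearMap_apply, RingHom.toRatAlgHom_apply, map_one] at hconj
  rw [show (fun w : ℂ => conj z * w) = LinearMap.mulLeft ℚ (conj z) from rfl, hmul,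
    show (fun w : ℂ => conj w) = (starRingEnd ℂ).toRatAlgHom.toLinearMap from rfl, hconj,
    Set.pair_comm]

theorem isAlgebraic_of_mem_span_one_pair {K A : Type*} [Field K] [CommRing A] [Nontrivial A]
    [Algebra K A] {ω x : A} (hω : IsAlgebraic K ω) (hx : x ∈ span K {1, ω}) :
    IsAlgebraic K x := by
  obtain ⟨a, b, rfl⟩ := mem_span_pair.mp hx
  exact (isAlgebraic_one.smul a).add (hω.smul b)

theorem Transcendental.of_mul_mem_span_one_pair {K L : Type*} [Field K] [Field L] [Algebra K L]
    {τ ω l : L} (hτ : Transcendental K τ) (hl : l ≠ 0) (hl_mem : l ∈ span K {1, ω})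
    (hlτ_mem : l * τ ∈ span K {1, ω}) : Transcendental K ω := fun hω =>
  hτ <| .of_mul (mem_nonZeroDivisors_of_ne_zero hl) (isAlgebraic_of_mem_span_one_pair hω hl_mem)
    (isAlgebraic_of_mem_span_one_pair hω hlτ_mem)

theorem Complex.irrational_re_of_transcendental_of_norm_eq_one {ω : ℂ} (hω : Transcendental ℚ ω)
    (h1 : ‖ω‖ = 1) : Irrational ω.re := by
  rintro ⟨q, hq⟩
  have hnormSq : normSq ω = 1 := by rw [← Complex.sq_norm, h1, one_pow]
  have hroot : ω ^ 2 - 2 * q * ω + 1 = 0 := by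
    have hsum := add_conj ω
    have hprod := mul_conj ω
    rw [← hq] at hsum
    rw [hnormSq] at hprod
    push_cast at hsum hprod
    linear_combination ω * hsum - hprod
  refine hω ⟨X ^ 2 - C (2 * q) * X + 1, ?_, ?_⟩
  · exact Monic.ne_zero (by monicity!)
  · simp [hroot]

theorem Irrational.eq_zero_of_ratCast_add_ratCast_mul_eq_zero {x : ℝ} (hx : Irrational x)
    {p q : ℚ} (h : (p : ℝ) + q * x = 0) : p = 0 ∧ q = 0 := by
  obtain rfl : q = 0 := by
    by_contra hq
    exact ((hx.ratCast_mul hq).ratCast_add p).ne_zero h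
  simpa using h

theorem Rat.eq_zero_of_sq_eq_mul_sq {r x y : ℚ} (hr : ¬IsSquare r) (h : x ^ 2 = r * y ^ 2) :
    y = 0 := by
  by_contra hy
  exact hr ⟨x / y, by field_simp; linear_combination -h⟩

theorem Rat.eq_zero_of_sq_add_sq_eq_mul_of_mul_eq_mul {r a b c d : ℚ} (hr : ¬IsSquare r)
    (hsq : a ^ 2 + b ^ 2 = r * (c ^ 2 + d ^ 2)) (hmul : a * b = r * (c * d)) :
    c = 0 ∧ d = 0 := by
  have hplus : c + d = 0 := Rat.eq_zero_of_sq_eq_mul_sq hr (x := a + b)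
    (by linear_combination hsq + 2 * hmul)
  have hminus : c - d = 0 := Rat.eq_zero_of_sq_eq_mul_sq hr (x := a - b)
    (by linear_combination hsq - 2 * hmul)
  constructor <;> linarith

theorem Complex.normSq_add_mul_of_norm_eq_one {ω : ℂ} (hω : ‖ω‖ = 1) (a b : ℝ) :
    normSq (a + b * ω) = a ^ 2 + b ^ 2 + 2 * a * b * ω.re := by
  have hnormSq : ω.re * ω.re + ω.im * ω.im = 1 := by
    rw [← normSq_apply, ← Complex.sq_norm, hω, one_pow]
  simp only [normSq_apply, add_re, add_im, mul_re, mul_im, ofReal_re, ofReal_im]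
  linear_combination b ^ 2 * hnormSq

theorem Complex.eq_zero_of_normSq_eq_mul_normSq {ω : ℂ} (hω : ‖ω‖ = 1) (hre : Irrational ω.re)
    {r a b c d : ℚ} (hr : ¬IsSquare r) (h : normSq (a + b * ω) = r * normSq (c + d * ω)) :
    c = 0 ∧ d = 0 := by
  have expand (x y : ℚ) := normSq_add_mul_of_norm_eq_one hω x y
  push_cast at expand
  rw [expand, expand] at h
  obtain ⟨hsq, hmul⟩ := hre.eq_zero_of_ratCast_add_ratCast_mul_eq_zero
    (p := a ^ 2 + b ^ 2 - r * (c ^ 2 + d ^ 2)) (q := 2 * (a * b - r * (c * d)))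
    (by push_cast; linear_combination h)
  exact Rat.eq_zero_of_sq_add_sq_eq_mul_of_mul_eq_mul (a := a) (b := b) hr
    (by linear_combination hsq) (by linear_combination hmul / 2)

/-- If `τ` is transcendental with `|τ|² = 2`, then `V = ℚ·1 + ℚ·τ` is homothetic to
its complex conjugate, but `V` is not homothetic to any space `ℚ·1 + ℚ·ω` with
`|ω| = 1`. -/
theorem transcendental_norm_two_space
    (τ : ℂ) (htr : Transcendental ℚ τ) (habs : ‖τ‖ ^ 2 = 2) :
    (∃ l : ℂ, l ≠ 0 ∧
        (fun z : ℂ => l * z) '' (Submodule.span ℚ {1, τ} : Set ℂ) =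
          (fun z : ℂ => starRingEnd ℂ z) '' (Submodule.span ℚ {1, τ} : Set ℂ)) ∧
    ¬ ∃ (l ω : ℂ), l ≠ 0 ∧ ‖ω‖ = 1 ∧
        (fun z : ℂ => l * z) '' (Submodule.span ℚ {1, τ} : Set ℂ) =
          (Submodule.span ℚ {1, ω} : Set ℂ) := by
  have hτ : normSq τ = (2 : ℚ) := by rw [← Complex.sq_norm, habs]; norm_num
  refine ⟨⟨conj τ, ?_, image_conj_mul_span_one_pair two_ne_zero hτ⟩, ?_⟩
  · rw [_root_.map_ne_zero]; rintro rfl; simp at hτ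
  rintro ⟨l, ω, hl, hω, heq⟩
  have hl_mem : l ∈ (span ℚ {1, ω} : Set ℂ) := heq ▸ ⟨1, subset_span (by simp), mul_one l⟩
  have hlτ_mem : l * τ ∈ (span ℚ {1, ω} : Set ℂ) := heq ▸ ⟨τ, subset_span (by simp), rfl⟩
  have hre := irrational_re_of_transcendental_of_norm_eq_one
    (htr.of_mul_mem_span_one_pair hl hl_mem hlτ_mem) hω
  obtain ⟨c, d, rfl⟩ := mem_span_pair.mp hl_mem
  obtain ⟨a, b, hab⟩ := mem_span_pair.mp hlτ_mem
  simp only [Rat.smul_def, mul_one] at hl hab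
  have hnorm : normSq (a + b * ω) = (2 : ℚ) * normSq (c + d * ω) := by
    rw [hab, map_mul, hτ, mul_comm]
  have two_not_square : ¬IsSquare (2 : ℚ) := by norm_num [Rat.isSquare_iff]
  obtain ⟨rfl, rfl⟩ := eq_zero_of_normSq_eq_mul_normSq hω hre two_not_square hnorm
  simp at hl
end

section
/- A space V = Q·1 + Q·τ (τ ∈ C \ R) admits a homothety onto itself with non-rational ratio, i.e. λV = V for some λ ∈ C \ Q, if and only if τ is an imaginary quadratic irrational, i.e. [Q(τ):Q] = 2. -/
/-!
If `l V ⊆ V`, write `l = p + q τ` and `l τ = r + s τ` with rational coefficients; `l ∉ ℚ` forces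
`q ≠ 0`, and eliminating `l` gives `q τ ^ 2 + (p - s) τ - r = 0`. Conversely, if
`a τ ^ 2 + b τ + c = 0` with `a ≠ 0`, then `τ ^ 2 = -(b τ + c) / a ∈ V`, and since `τ` is
irrational also `c ≠ 0`, so `τ⁻¹ = -(a τ + b) / c ∈ V`. Hence `τ V ⊆ V` and `τ⁻¹ V ⊆ V`,
i.e. `τ V = V`.
-/

open Pointwise

theorem Set.smul_set_eq_self_of_forall_mul_mem {K : Type*} [GroupWithZero K] {S : Set K}
    {l : K} (hl : l ≠ 0) (hmul : ∀ v ∈ S, l * v ∈ S) (hinv : ∀ v ∈ S, l⁻¹ * v ∈ S) :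
    l • S = S := by
  refine (Set.smul_set_subset_iff.mpr hmul).antisymm ?_
  rw [Set.subset_smul_set_iff₀ hl]
  exact Set.smul_set_subset_iff.mpr hinv

section SpanOnePair

variable {K : Type*} [Field K] [CharZero K]

theorem mem_span_pair_iff_exists_rat {x y z : K} :
    z ∈ Submodule.span ℚ ({x, y} : Set K) ↔ ∃ m n : ℚ, (m : K) * x + n * y = z := by
  simp only [Submodule.mem_span_pair, Rat.smul_def]

theorem mul_mem_span_one_pair {τ l v : K} (hl : l ∈ Submodule.span ℚ ({1, τ} : Set K))
    (hlτ : l * τ ∈ Submodule.span ℚ ({1, τ} : Set K))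
    (hv : v ∈ Submodule.span ℚ ({1, τ} : Set K)) :
    l * v ∈ Submodule.span ℚ ({1, τ} : Set K) := by
  obtain ⟨m, n, rfl⟩ := mem_span_pair_iff_exists_rat.mp hv
  have : l * (m * 1 + n * τ) = (m : ℚ) • l + (n : ℚ) • (l * τ) := by
    simp only [Rat.smul_def]; ring
  rw [this]
  exact add_mem (Submodule.smul_mem _ _ hl) (Submodule.smul_mem _ _ hlτ)

theorem exists_quadratic_of_mul_mem_span_one_pair {τ l : K} (hl : ∀ q : ℚ, l ≠ q)
    (hl1 : l ∈ Submodule.span ℚ ({1, τ} : Set K))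
    (hlτ : l * τ ∈ Submodule.span ℚ ({1, τ} : Set K)) :
    ∃ a b c : ℚ, a ≠ 0 ∧ (a : K) * τ ^ 2 + b * τ + c = 0 := by
  obtain ⟨p, q, hpq⟩ := mem_span_pair_iff_exists_rat.mp hl1
  obtain ⟨r, s, hrs⟩ := mem_span_pair_iff_exists_rat.mp hlτ
  have hq : q ≠ 0 := by
    rintro rfl
    exact hl p (by simpa using hpq.symm)
  refine ⟨q, p - s, -r, hq, ?_⟩
  push_cast
  linear_combination τ * hpq - hrs

theorem sq_mem_span_one_pair_of_quadratic {τ : K} {a b c : ℚ} (ha : a ≠ 0)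
    (h : (a : K) * τ ^ 2 + b * τ + c = 0) :
    τ * τ ∈ Submodule.span ℚ ({1, τ} : Set K) := by
  refine mem_span_pair_iff_exists_rat.mpr ⟨-c / a, -b / a, ?_⟩
  have ha' : (a : K) ≠ 0 := by exact_mod_cast ha
  push_cast
  field_simp
  linear_combination -h

theorem inv_mem_span_one_pair_of_quadratic {τ : K} (hτ : ∀ q : ℚ, τ ≠ q) {a b c : ℚ}
    (ha : a ≠ 0) (h : (a : K) * τ ^ 2 + b * τ + c = 0) :
    τ⁻¹ ∈ Submodule.span ℚ ({1, τ} : Set K) := by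
  have hτ0 : τ ≠ 0 := by simpa using hτ 0
  -- a root of `a X ^ 2 + b X` would be `0` or `-b / a`, both rational
  have hc : (c : K) ≠ 0 := by
    intro hc
    refine hτ (-b / a) ?_
    have ha' : (a : K) ≠ 0 := by exact_mod_cast ha
    push_cast
    field_simp
    exact mul_left_cancel₀ hτ0 (by linear_combination h - hc)
  refine mem_span_pair_iff_exists_rat.mpr ⟨-b / c, -a / c, ?_⟩
  push_cast
  field_simp
  linear_combination -h

end SpanOnePair

/-- A space `V = ℚ·1 + ℚ·τ` (`τ ∉ ℝ`) admits a self-homothety with non-rational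
ratio (`λ V = V` for some `λ ∈ ℂ \ ℚ`) if and only if `τ` is an (imaginary)
quadratic irrational, i.e. `τ` satisfies a nontrivial quadratic equation over `ℚ`. -/
theorem CM_iff_quadratic
    (τ : ℂ) (hτ : ∀ r : ℝ, τ ≠ (r : ℂ)) :
    (∃ l : ℂ, (∀ q : ℚ, l ≠ (q : ℂ)) ∧
        (fun z : ℂ => l * z) '' (Submodule.span ℚ {1, τ} : Set ℂ) =
          (Submodule.span ℚ {1, τ} : Set ℂ)) ↔
    (∃ a b c : ℚ, a ≠ 0 ∧ (a : ℂ) * τ ^ 2 + (b : ℂ) * τ + (c : ℂ) = 0) := by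
  set V : Submodule ℚ ℂ := Submodule.span ℚ {1, τ}
  have h1 : (1 : ℂ) ∈ V := Submodule.subset_span (by simp)
  have hτV : τ ∈ V := Submodule.subset_span (by simp)
  constructor
  · rintro ⟨l, hl, himg⟩
    have hmul : ∀ v ∈ V, l * v ∈ V := fun v hv => by
      rw [← SetLike.mem_coe, ← himg]
      exact Set.mem_image_of_mem _ hv
    exact exists_quadratic_of_mul_mem_span_one_pair hl (by simpa using hmul 1 h1) (hmul τ hτV)
  · rintro ⟨a, b, c, ha, h⟩
    have hτq : ∀ q : ℚ, τ ≠ q := fun q => by exact_mod_cast hτ q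
    have hτ0 : τ ≠ 0 := by simpa using hτq 0
    have hτinv := inv_mem_span_one_pair_of_quadratic hτq ha h
    refine ⟨τ, hτq, Set.smul_set_eq_self_of_forall_mul_mem hτ0
      (fun v => mul_mem_span_one_pair hτV (sq_mem_span_one_pair_of_quadratic ha h))
      (fun v => mul_mem_span_one_pair hτinv ?_)⟩
    rwa [inv_mul_cancel₀ hτ0]
end

section
/- Let d be a squarefree positive integer with d ≠ 1, 3, and let V = Q(√−d) ⊂ C. If v₀, v₁ ∈ V \ {0} and the argument of v₁/v₀ is a rational multiple of π but not an integer multiple of π, then v₁/v₀ is a rational multiple of √−d. In other words, up to equivalence every rational angle in Q(√−d) is of the form (v, √−d·v). -/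
/-!
If `arg z ∈ πℚ` then `ζ = z / z̄ = exp (2i·arg z)` is a root of unity, and for `z ∈ ℚ(√-d)` it
lies in `ℚ(√-d)` as well. Writing `ζ = P + Q√-d`, we get `P² + dQ² = 1`, and `2P = ζ + ζ̄` is a
rational algebraic integer, hence an integer `k` with `k² + d(2Q)² = 4`. For squarefree
`d ≠ 1, 3` this forces `Q = 0`, so `ζ = ±1`. The case `ζ = 1` means `z` is real, i.e. `arg z ∈ πℤ`;
the case `ζ = -1` means `z` is purely imaginary, i.e. a rational multiple of `√-d`.
-/

open Complex ComplexConjugate Polynomial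

theorem Squarefree.eq_of_mul_rat_sq_eq {d m : ℕ} (hd : Squarefree d) (hm : Squarefree m) {r : ℚ}
    (h : (d : ℚ) * r ^ 2 = m) : d = m := by
  have key : d * r.num.natAbs ^ 2 = m * r.den ^ 2 := by
    have hQ : (d : ℚ) * r.num ^ 2 = m * r.den ^ 2 := by
      rw [← Rat.mul_den_eq_num, ← h]; ring
    have hZ : (d : ℤ) * r.num ^ 2 = m * r.den ^ 2 := by exact_mod_cast hQ
    simpa [Int.natAbs_mul, Int.natAbs_pow] using congrArg Int.natAbs hZ
  have hcop : (r.num.natAbs ^ 2).Coprime (r.den ^ 2) := r.reduced.pow 2 2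
  have hden : r.den = 1 := by
    have hdvd : r.den ^ 2 ∣ d := hcop.symm.dvd_of_dvd_mul_right ⟨m, by rw [key, mul_comm]⟩
    exact Nat.isUnit_iff.1 (hd _ (by rwa [← sq]))
  have hnum : r.num.natAbs = 1 := by
    have hdvd : r.num.natAbs ^ 2 ∣ m := hcop.dvd_of_dvd_mul_right ⟨d, by rw [← key, mul_comm]⟩
    exact Nat.isUnit_iff.1 (hm _ (by rwa [← sq]))
  simpa [hden, hnum] using key

theorem eq_zero_of_sq_add_mul_sq_eq_four {d : ℕ} (hd : Squarefree d) (hd1 : d ≠ 1) (hd3 : d ≠ 3)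
    (k : ℤ) (y : ℚ) (h : (k : ℚ) ^ 2 + d * y ^ 2 = 4) : y = 0 := by
  have hk : k ^ 2 ≤ 2 ^ 2 := by
    have : (k : ℚ) ^ 2 ≤ 2 ^ 2 := by nlinarith [sq_nonneg y, (Nat.cast_nonneg d : (0 : ℚ) ≤ d)]
    exact_mod_cast this
  obtain ⟨hk₁, hk₂⟩ := abs_le_of_sq_le_sq' hk (by norm_num)
  have h3 : (d : ℚ) * y ^ 2 = 3 → False := fun h3 =>
    hd3 (hd.eq_of_mul_rat_sq_eq Nat.prime_three.squarefree (by exact_mod_cast h3))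
  interval_cases k
  · simpa [hd.ne_zero] using (by push_cast at h; linarith : (d : ℚ) * y ^ 2 = 0)
  · exact (h3 (by push_cast at h; linarith)).elim
  · refine absurd (hd.eq_of_mul_rat_sq_eq squarefree_one (r := y / 2) ?_) hd1
    push_cast at h ⊢; linear_combination h / 4
  · exact (h3 (by push_cast at h; linarith)).elim
  · simpa [hd.ne_zero] using (by push_cast at h; linarith : (d : ℚ) * y ^ 2 = 0)

theorem isIntegral_of_pow_eq_one_s11 {R A : Type*} [CommRing R] [Ring A] [Algebra R A] {x : A} {n : ℕ}
    (hx : x ^ n = 1) (hn : n ≠ 0) : IsIntegral R x :=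
  ⟨X ^ n - 1, monic_X_pow_sub_C 1 hn, by simp [hx]⟩

theorem exists_int_eq_two_mul_of_re_eq_of_pow_eq_one {ζ : ℂ} {n : ℕ} (hζ : ζ ^ n = 1) (hn : n ≠ 0)
    {r : ℚ} (hr : ζ.re = r) : ∃ k : ℤ, (k : ℚ) = 2 * r := by
  have hsum : IsIntegral ℤ (ζ + conj ζ) :=
    (isIntegral_of_pow_eq_one_s11 hζ hn).add
      (isIntegral_of_pow_eq_one_s11 (by rw [← map_pow, hζ, map_one]) hn)
  rw [add_conj, hr, show ((2 * r : ℝ) : ℂ) = algebraMap ℚ ℂ (2 * r) by simp,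
    isIntegral_algebraMap_iff (algebraMap ℚ ℂ).injective] at hsum
  exact IsIntegrallyClosed.isIntegral_iff.1 hsum

theorem div_conj_eq_exp_two_mul_arg {z : ℂ} (hz : z ≠ 0) : z / conj z = exp (2 * arg z * I) := by
  have hn : (‖z‖ : ℂ) ≠ 0 := by simpa using hz
  conv_lhs => rw [← norm_mul_exp_arg_mul_I z]
  rw [map_mul, conj_ofReal, ← exp_conj, map_mul, conj_ofReal, conj_I, mul_div_mul_left _ _ hn,
    ← exp_sub]
  ring_nf

theorem exists_int_arg_eq_of_div_conj_eq_one {z : ℂ} (hz : z ≠ 0) (h : z / conj z = 1) :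
    ∃ n : ℤ, arg z = n * Real.pi := by
  obtain ⟨n, hn⟩ := exp_eq_one_iff.1 ((div_conj_eq_exp_two_mul_arg hz).symm.trans h)
  have h2I : (arg z : ℂ) * (2 * I) = (n * Real.pi : ℝ) * (2 * I) := by
    push_cast; linear_combination hn
  exact ⟨n, ofReal_injective (mul_right_cancel₀ (by simp) h2I)⟩

theorem re_eq_zero_of_div_conj_eq_neg_one {z : ℂ} (h : z / conj z = -1) : z.re = 0 := by
  have hc : conj z ≠ 0 := fun hc => by simp [hc] at h
  have := congrArg re ((div_eq_iff hc).1 h)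
  simp only [neg_mul, one_mul, neg_re, conj_re] at this
  linarith

noncomputable def sqrtNeg (d : ℕ) : ℂ := (Real.sqrt d : ℂ) * I

theorem sqrtNeg_mul_self (d : ℕ) : sqrtNeg d * sqrtNeg d = -d := by
  have hs : (Real.sqrt d : ℂ) * Real.sqrt d = d := by
    exact_mod_cast Real.mul_self_sqrt (Nat.cast_nonneg d)
  calc sqrtNeg d * sqrtNeg d = (Real.sqrt d : ℂ) * Real.sqrt d * (I * I) := by
        unfold sqrtNeg; ring
    _ = -d := by rw [hs, I_mul_I, mul_neg_one]

theorem conj_sqrtNeg (d : ℕ) : conj (sqrtNeg d) = -sqrtNeg d := by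
  simp [sqrtNeg]

section sqrtNeg

variable {d : ℕ}

theorem re_add_mul_sqrtNeg (a b : ℚ) : ((a : ℂ) + b * sqrtNeg d).re = a := by
  simp [sqrtNeg]

theorem conj_add_mul_sqrtNeg (a b : ℚ) :
    conj ((a : ℂ) + b * sqrtNeg d) = (a : ℂ) + (-b : ℚ) * sqrtNeg d := by
  simp [conj_sqrtNeg]

theorem normSq_add_mul_sqrtNeg (a b : ℚ) :
    normSq ((a : ℂ) + b * sqrtNeg d) = ((a ^ 2 + d * b ^ 2 : ℚ) : ℝ) := by
  have := sqrtNeg_mul_self d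
  apply ofReal_injective
  rw [normSq_eq_conj_mul_self, conj_add_mul_sqrtNeg]
  push_cast
  linear_combination (-(b : ℂ) ^ 2) * this

theorem mem_span_sqrtNeg_iff {z : ℂ} :
    z ∈ Submodule.span ℚ ({1, sqrtNeg d} : Set ℂ) ↔ ∃ a b : ℚ, (a : ℂ) + b * sqrtNeg d = z := by
  simp [Submodule.mem_span_pair, Rat.smul_def]

theorem div_mem_span_sqrtNeg {x y : ℂ} (hx : x ∈ Submodule.span ℚ ({1, sqrtNeg d} : Set ℂ))
    (hy : y ∈ Submodule.span ℚ ({1, sqrtNeg d} : Set ℂ)) :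
    x / y ∈ Submodule.span ℚ ({1, sqrtNeg d} : Set ℂ) := by
  obtain ⟨a, b, rfl⟩ := mem_span_sqrtNeg_iff.1 hx
  obtain ⟨c, e, rfl⟩ := mem_span_sqrtNeg_iff.1 hy
  rcases eq_or_ne ((c : ℂ) + e * sqrtNeg d) 0 with hy0 | hy0
  · rw [hy0, div_zero]; exact zero_mem _
  have hN : c ^ 2 + d * e ^ 2 ≠ 0 := by
    have := (normSq_pos.2 hy0).ne'
    rwa [normSq_add_mul_sqrtNeg, Rat.cast_ne_zero] at this
  refine mem_span_sqrtNeg_iff.2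
    ⟨(a * c + d * b * e) / (c ^ 2 + d * e ^ 2), (b * c - a * e) / (c ^ 2 + d * e ^ 2), ?_⟩
  rw [eq_div_iff hy0]
  have hNC : (c : ℂ) ^ 2 + d * e ^ 2 ≠ 0 := by exact_mod_cast hN
  push_cast
  field_simp
  linear_combination ((b : ℂ) * c - a * e) * e * sqrtNeg_mul_self d

theorem conj_mem_span_sqrtNeg {z : ℂ} (hz : z ∈ Submodule.span ℚ ({1, sqrtNeg d} : Set ℂ)) :
    conj z ∈ Submodule.span ℚ ({1, sqrtNeg d} : Set ℂ) := by
  obtain ⟨a, b, rfl⟩ := mem_span_sqrtNeg_iff.1 hz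
  exact mem_span_sqrtNeg_iff.2 ⟨a, -b, (conj_add_mul_sqrtNeg a b).symm⟩

theorem eq_one_or_eq_neg_one_of_pow_eq_one (hd : Squarefree d) (hd1 : d ≠ 1) (hd3 : d ≠ 3)
    {ζ : ℂ} (hζV : ζ ∈ Submodule.span ℚ ({1, sqrtNeg d} : Set ℂ)) {n : ℕ} (hζ : ζ ^ n = 1)
    (hn : n ≠ 0) : ζ = 1 ∨ ζ = -1 := by
  obtain ⟨P, Q, rfl⟩ := mem_span_sqrtNeg_iff.1 hζV
  have hnorm : P ^ 2 + d * Q ^ 2 = 1 := by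
    have := normSq_eq_norm_sq (P + Q * sqrtNeg d : ℂ)
    rw [norm_eq_one_of_pow_eq_one hζ hn, normSq_add_mul_sqrtNeg] at this
    exact_mod_cast this.trans (one_pow 2)
  obtain ⟨k, hk⟩ := exists_int_eq_two_mul_of_re_eq_of_pow_eq_one hζ hn (re_add_mul_sqrtNeg P Q)
  have hQ : Q = 0 := by
    simpa using eq_zero_of_sq_add_mul_sq_eq_four hd hd1 hd3 k (2 * Q)
      (by rw [hk]; linear_combination 4 * hnorm)
  have hP : P ^ 2 = 1 := by simpa [hQ] using hnorm
  rcases sq_eq_one_iff.1 hP with rfl | rfl <;> simp [hQ]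

end sqrtNeg

theorem rational_angles_in_imaginary_quadratic_field_general
    (d : ℕ) (hd : Squarefree d) (hd1 : d ≠ 1) (hd3 : d ≠ 3)
    (v₀ v₁ : ℂ)
    (hv₀ : v₀ ∈ Submodule.span ℚ ({1, (Real.sqrt d : ℂ) * Complex.I} : Set ℂ))
    (hv₁ : v₁ ∈ Submodule.span ℚ ({1, (Real.sqrt d : ℂ) * Complex.I} : Set ℂ))
    (hrat : ∃ q : ℚ, Complex.arg (v₁ / v₀) = (q : ℝ) * Real.pi)
    (hnint : ∀ k : ℤ, Complex.arg (v₁ / v₀) ≠ (k : ℝ) * Real.pi) :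
    ∃ q : ℚ, v₁ / v₀ = (q : ℂ) * ((Real.sqrt d : ℂ) * Complex.I) := by
  obtain ⟨q, hq⟩ := hrat
  set z := v₁ / v₀
  have hz : z ≠ 0 := fun h => hnint 0 (by simp [h])
  have hzV : z ∈ Submodule.span ℚ ({1, sqrtNeg d} : Set ℂ) := div_mem_span_sqrtNeg hv₁ hv₀
  have hroot : (z / conj z) ^ q.den = 1 := by
    rw [div_conj_eq_exp_two_mul_arg hz, hq]
    convert (isPrimitiveRoot_exp_rat q).pow_eq_one using 3
    push_cast; ring
  rcases eq_one_or_eq_neg_one_of_pow_eq_one hd hd1 hd3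
    (div_mem_span_sqrtNeg hzV (conj_mem_span_sqrtNeg hzV)) hroot q.den_nz with h | h
  · obtain ⟨n, hn⟩ := exists_int_arg_eq_of_div_conj_eq_one hz h
    exact absurd hn (hnint n)
  · obtain ⟨a, b, hab⟩ := mem_span_sqrtNeg_iff.1 hzV
    have ha : a = 0 := by
      have := re_eq_zero_of_div_conj_eq_neg_one h
      rwa [← hab, re_add_mul_sqrtNeg, Rat.cast_eq_zero] at this
    exact ⟨b, by rw [← hab, ha]; simp [sqrtNeg]⟩

/-- Let `d` be a squarefree positive integer, `d ≠ 1, 3`, and let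
`V = ℚ(√−d) = ℚ·1 + ℚ·(√d·i) ⊂ ℂ`.  If `v₀, v₁ ∈ V` are nonzero and the argument
of `v₁/v₀` is a rational multiple of `π` but not an integer multiple of `π`,
then `v₁/v₀` is a rational multiple of `√−d`. -/
theorem rational_angles_in_imaginary_quadratic_field
    (d : ℕ) (hd : Squarefree d) (hdpos : 0 < d) (hd1 : d ≠ 1) (hd3 : d ≠ 3)
    (v₀ v₁ : ℂ)
    (hv₀ : v₀ ∈ Submodule.span ℚ ({1, (Real.sqrt d : ℂ) * Complex.I} : Set ℂ))
    (hv₁ : v₁ ∈ Submodule.span ℚ ({1, (Real.sqrt d : ℂ) * Complex.I} : Set ℂ))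
    (h₀ : v₀ ≠ 0) (h₁ : v₁ ≠ 0)
    (hrat : ∃ q : ℚ, Complex.arg (v₁ / v₀) = (q : ℝ) * Real.pi)
    (hnint : ∀ k : ℤ, Complex.arg (v₁ / v₀) ≠ (k : ℝ) * Real.pi) :
    ∃ q : ℚ, v₁ / v₀ = (q : ℂ) * ((Real.sqrt d : ℂ) * Complex.I) :=
  rational_angles_in_imaginary_quadratic_field_general d hd hd1 hd3 v₀ v₁ hv₀ hv₁ hrat hnint
end

section
/- Let V = Q·1 + Q·τ with τ ∈ C \ R, τ algebraic, and suppose [Q(τ):Q] > 2 (so V is not CM). Then V contains only finitely many rational angles: there are only finitely many pairs of lines through 0, each containing a nonzero point of V, forming an angle that is a rational multiple of π. -/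
/-!
Write `V = ℚ + ℚτ`. If the lines `ℝv` and `ℝw` (`v, w ∈ V`) meet at the angle `θ = arg (w / v)`,
then `ζ = e^{2iθ} = (w / v) / conj (w / v)` lies in the number field `ℚ(τ, τ̄)`; when `θ ∈ πℚ`
it is a root of unity, so only finitely many `ζ` occur.

For a fixed `ζ ≠ 1`, suppose three distinct lines `ℝv₁, ℝv₂, ℝv₃` of `V` are each rotated by
`θ` onto lines of `V`. Any two of the `vᵢ` form a `ℚ`-basis of `V`, and comparing the expansions
of `v₃` and of its rotated image shows that one real multiple `μ` of `e^{iθ}` maps both `v₁` and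
`v₂` into `V`, hence `μV ⊆ V`. Since `τ` is not quadratic, such a multiplier is rational, which
contradicts `ζ ≠ 1`. So each `ζ` accounts for at most two lines, and both lines of a rational
angle are among these finitely many.
-/

open Complex ComplexConjugate Module Submodule

theorem linearIndependent_pair_of_im_div_ne_zero {v w : ℂ} (h : (w / v).im ≠ 0) :
    LinearIndependent ℝ ![v, w] := by
  have hv : v ≠ 0 := by rintro rfl; simp at h
  refine (LinearIndependent.pair_iff' hv).2 fun a ha => h ?_
  rw [← ha, real_smul, mul_div_cancel_right₀ _ hv, ofReal_im]

theorem im_div_ne_zero_of_span_singleton_ne {v w : ℂ} (hv : v ≠ 0) (hw : w ≠ 0)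
    (h : ℝ ∙ v ≠ ℝ ∙ w) : (w / v).im ≠ 0 := by
  intro him
  have hre : (w / v).re ≠ 0 := fun hre => div_ne_zero hw hv (Complex.ext hre him)
  refine h ?_
  have hreal : ((w / v).re : ℂ) = w / v := Complex.ext (by simp) (by simp [him])
  rw [← div_mul_cancel₀ w hv, ← hreal, ← real_smul, span_singleton_smul_eq (IsUnit.mk0 _ hre)]

theorem div_conj_eq_one_iff {z : ℂ} (hz : z ≠ 0) : z / conj z = 1 ↔ z.im = 0 := by
  rw [div_eq_one_iff_eq ((map_ne_zero _).2 hz), eq_comm, conj_eq_iff_im]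

theorem exists_real_eq_mul_of_div_conj_eq {z w : ℂ} (hz : z ≠ 0) (hw : w ≠ 0)
    (h : w / conj w = z / conj z) : ∃ r : ℝ, r ≠ 0 ∧ w = r * z := by
  have hreal : conj (w / z) = w / z := by
    rw [div_eq_div_iff ((map_ne_zero _).2 hw) ((map_ne_zero _).2 hz)] at h
    rw [map_div₀, div_eq_div_iff ((map_ne_zero _).2 hz) hz]
    linear_combination -h
  obtain ⟨r, hr⟩ := conj_eq_iff_real.1 hreal
  refine ⟨r, fun h0 => div_ne_zero hw hz (by simp [hr, h0]), ?_⟩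
  rw [← hr, div_mul_cancel₀ _ hz]

theorem div_conj_eq_exp (z : ℂ) (hz : z ≠ 0) : z / conj z = exp (2 * arg z * I) := by
  have h := norm_mul_exp_arg_mul_I z
  have hc : conj z = ‖z‖ * exp (-(arg z * I)) := by
    conv_lhs => rw [← h]
    rw [map_mul, conj_ofReal, ← exp_conj, map_mul, conj_ofReal, conj_I]
    ring_nf
  have hn : (‖z‖ : ℂ) ≠ 0 := by simpa using hz
  rw [hc]
  nth_rewrite 1 [← h]
  rw [mul_div_mul_left _ _ hn, ← exp_sub]
  ring_nf

theorem div_conj_pow_den_eq_one {z : ℂ} (hz : z ≠ 0) {q : ℚ} (h : arg z = q * Real.pi) :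
    (z / conj z) ^ q.den = 1 := by
  have hq : (q : ℂ) * q.den = q.num := by exact_mod_cast Rat.mul_den_eq_num q
  have : (q.den : ℂ) * (2 * ((q * Real.pi : ℝ) : ℂ) * I) = q.num * (2 * Real.pi * I) := by
    push_cast
    linear_combination (2 * Real.pi * I) * hq
  rw [div_conj_eq_exp z hz, ← exp_nat_mul, h, this, exp_int_mul_two_pi_mul_I]

section RatSubspace

variable {V : Submodule ℚ ℂ} [FiniteDimensional ℚ V]

theorem span_pair_eq_of_im_div_ne_zero (hV : finrank ℚ V ≤ 2) {v w : ℂ} (hv : v ∈ V)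
    (hw : w ∈ V) (h : (w / v).im ≠ 0) : span ℚ {v, w} = V := by
  have hli : LinearIndependent ℚ ![v, w] :=
    (linearIndependent_pair_of_im_div_ne_zero h).restrict_scalars' ℚ
  refine eq_of_le_of_finrank_le (span_le.2 (Set.insert_subset hv (by simpa using hw))) ?_
  rw [← Matrix.range_cons_cons_empty v w ![], finrank_span_eq_card hli, Fintype.card_fin]
  exact hV

theorem exists_rat_eq_mul_of_three_lines (hV : finrank ℚ V ≤ 2) {z v₁ v₂ v₃ : ℂ} {r₁ r₂ r₃ : ℝ}
    (hz : z ≠ 0) (hr₁ : r₁ ≠ 0) (hr₂ : r₂ ≠ 0) (hv₁ : v₁ ∈ V) (hv₂ : v₂ ∈ V) (hv₃ : v₃ ∈ V)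
    (hv₁0 : v₁ ≠ 0) (hv₂0 : v₂ ≠ 0) (hv₃0 : v₃ ≠ 0) (h₁₂ : ℝ ∙ v₁ ≠ ℝ ∙ v₂)
    (h₂₃ : ℝ ∙ v₂ ≠ ℝ ∙ v₃) (hu₁ : r₁ * z * v₁ ∈ V) (hu₂ : r₂ * z * v₂ ∈ V)
    (hu₃ : r₃ * z * v₃ ∈ V) : ∃ c : ℚ, (r₃ : ℂ) = c * r₁ := by
  have hr₁' : (r₁ : ℂ) ≠ 0 := ofReal_ne_zero.2 hr₁
  have hr₂' : (r₂ : ℂ) ≠ 0 := ofReal_ne_zero.2 hr₂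
  have hv₁₂ := im_div_ne_zero_of_span_singleton_ne hv₁0 hv₂0 h₁₂
  have hu₁₂ : (r₂ * z * v₂ / (r₁ * z * v₁)).im ≠ 0 := by
    rwa [show r₂ * z * v₂ / (r₁ * z * v₁) = ((r₂ / r₁ : ℝ) : ℂ) * (v₂ / v₁) by
      push_cast; field_simp, im_ofReal_mul, mul_ne_zero_iff, and_iff_right (by positivity)]
  obtain ⟨p, q, hv₃pq⟩ := mem_span_pair.1 (span_pair_eq_of_im_div_ne_zero hV hv₁ hv₂ hv₁₂ ▸ hv₃)
  obtain ⟨s, t, hu₃st⟩ :=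
    mem_span_pair.1 (span_pair_eq_of_im_div_ne_zero hV hu₁ hu₂ hu₁₂ ▸ hu₃)
  simp only [Rat.smul_def] at hv₃pq hu₃st
  have hp : (p : ℂ) ≠ 0 := by
    rintro hp0
    rw [hp0, zero_mul, zero_add] at hv₃pq
    exact im_div_ne_zero_of_span_singleton_ne hv₂0 hv₃0 h₂₃
      (by rw [← hv₃pq, mul_div_cancel_right₀ _ hv₂0, ratCast_im])
  -- expand `r₃ z v₃` in the `ℝ`-basis `r₁ z v₁, r₂ z v₂` in two ways
  obtain ⟨hs, -⟩ := (linearIndependent_pair_of_im_div_ne_zero hu₁₂).eq_of_pair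
    (s := r₃ * p / r₁) (t := r₃ * q / r₂) (s' := s) (t' := t) (by
      simp only [real_smul]
      push_cast
      rw [hu₃st, ← hv₃pq]
      field_simp)
  refine ⟨s / p, ?_⟩
  rw [Rat.cast_div, ← ofReal_ratCast, ← hs]
  push_cast
  field_simp

theorem exists_real_mul_mem_of_three_lines (hV : finrank ℚ V ≤ 2) {z v₁ v₂ v₃ : ℂ}
    (hv₁ : v₁ ∈ V) (hv₂ : v₂ ∈ V) (hv₃ : v₃ ∈ V) (hv₁0 : v₁ ≠ 0) (hv₂0 : v₂ ≠ 0)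
    (hv₃0 : v₃ ≠ 0) (h₁₂ : ℝ ∙ v₁ ≠ ℝ ∙ v₂) (h₁₃ : ℝ ∙ v₁ ≠ ℝ ∙ v₃) (h₂₃ : ℝ ∙ v₂ ≠ ℝ ∙ v₃)
    (hz₁ : ∃ r : ℝ, r ≠ 0 ∧ r * z * v₁ ∈ V) (hz₂ : ∃ r : ℝ, r ≠ 0 ∧ r * z * v₂ ∈ V)
    (hz₃ : ∃ r : ℝ, r ≠ 0 ∧ r * z * v₃ ∈ V) :
    ∃ r : ℝ, r ≠ 0 ∧ ∀ v ∈ V, r * z * v ∈ V := by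
  by_cases hz : z = 0
  · exact ⟨1, one_ne_zero, fun v _ => by simp [hz]⟩
  obtain ⟨r₁, hr₁, hu₁⟩ := hz₁
  obtain ⟨r₂, hr₂, hu₂⟩ := hz₂
  obtain ⟨r₃, hr₃, hu₃⟩ := hz₃
  obtain ⟨c₁, hc₁⟩ := exists_rat_eq_mul_of_three_lines hV hz hr₁ hr₂ hv₁ hv₂ hv₃ hv₁0 hv₂0 hv₃0
    h₁₂ h₂₃ hu₁ hu₂ hu₃
  obtain ⟨c₂, hc₂⟩ := exists_rat_eq_mul_of_three_lines hV hz hr₂ hr₁ hv₂ hv₁ hv₃ hv₂0 hv₁0 hv₃0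
    h₁₂.symm h₁₃ hu₂ hu₁ hu₃
  refine ⟨r₃, hr₃, fun v hv => ?_⟩
  have hV₁₂ := span_pair_eq_of_im_div_ne_zero hV hv₁ hv₂
    (im_div_ne_zero_of_span_singleton_ne hv₁0 hv₂0 h₁₂)
  obtain ⟨a, b, rfl⟩ := mem_span_pair.1 (hV₁₂ ▸ hv)
  have : r₃ * z * (a • v₁ + b • v₂) = (a * c₁) • (r₁ * z * v₁) + (b * c₂) • (r₂ * z * v₂) := by
    simp only [Rat.smul_def]
    push_cast
    linear_combination (a * z * v₁) * hc₁ + (b * z * v₂) * hc₂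
  rw [this]
  exact add_mem (V.smul_mem _ hu₁) (V.smul_mem _ hu₂)

/-- `ζ = e^{2iθ}` encodes an angle `θ` modulo `π`: these are the lines of `V` whose rotation
by `θ` is again a line of `V`. -/
def rotatableLines (V : Submodule ℚ ℂ) (ζ : ℂ) : Set (Submodule ℝ ℂ) :=
  {ℓ | ∃ v ∈ V, ∃ w ∈ V, v ≠ 0 ∧ w ≠ 0 ∧ ℓ = ℝ ∙ v ∧ w / v / conj (w / v) = ζ}

theorem finite_rotatableLines (hV : finrank ℚ V ≤ 2)
    (hmul : ∀ μ : ℂ, (∀ v ∈ V, μ * v ∈ V) → ∃ q : ℚ, μ = q) {ζ : ℂ} (hζ : ζ ≠ 1) :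
    (rotatableLines V ζ).Finite := by
  by_contra hinf
  obtain ⟨t, hts, ht⟩ := Set.Infinite.exists_subset_card_eq hinf 3
  obtain ⟨ℓ₁, ℓ₂, ℓ₃, h₁₂, h₁₃, h₂₃, rfl⟩ := Finset.card_eq_three.1 ht
  simp only [Finset.coe_insert, Finset.coe_singleton, Set.insert_subset_iff,
    Set.singleton_subset_iff] at hts
  obtain ⟨⟨v₁, hv₁, w₁, hw₁, hv₁0, hw₁0, rfl, hζ₁⟩, ⟨v₂, hv₂, w₂, hw₂, hv₂0, hw₂0, rfl, hζ₂⟩,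
    ⟨v₃, hv₃, w₃, hw₃, hv₃0, hw₃0, rfl, hζ₃⟩⟩ := hts
  set z := w₁ / v₁
  have hz : z ≠ 0 := div_ne_zero hw₁0 hv₁0
  have hrot {v w : ℂ} (hv : v ≠ 0) (hw : w ≠ 0) (hwV : w ∈ V) (hvw : w / v / conj (w / v) = ζ) :
      ∃ r : ℝ, r ≠ 0 ∧ r * z * v ∈ V := by
    obtain ⟨r, hr, h⟩ :=
      exists_real_eq_mul_of_div_conj_eq hz (div_ne_zero hw hv) (hvw.trans hζ₁.symm)
    exact ⟨r, hr, by rwa [← h, div_mul_cancel₀ _ hv]⟩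
  obtain ⟨r, hr, hrz⟩ := exists_real_mul_mem_of_three_lines hV hv₁ hv₂ hv₃ hv₁0 hv₂0 hv₃0
    h₁₂ h₁₃ h₂₃ (hrot hv₁0 hw₁0 hw₁ hζ₁) (hrot hv₂0 hw₂0 hw₂ hζ₂) (hrot hv₃0 hw₃0 hw₃ hζ₃)
  obtain ⟨q, hq⟩ := hmul _ hrz
  have him : (r * z).im = 0 := by rw [hq, ratCast_im]
  rw [im_ofReal_mul, mul_eq_zero, or_iff_right hr] at him
  exact hζ (hζ₁.symm.trans ((div_conj_eq_one_iff hz).2 him))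

end RatSubspace

theorem finrank_span_pair_le {K M : Type*} [DivisionRing K] [AddCommGroup M] [Module K M]
    (x y : M) : finrank K (span K ({x, y} : Set M)) ≤ 2 := by
  classical
  exact (finrank_span_le_card _).trans (by simpa using Finset.card_le_two)

theorem exists_rat_eq_of_mul_mem_span {τ : ℂ}
    (hdeg : ∀ a b c : ℚ, (a : ℂ) * τ ^ 2 + (b : ℂ) * τ + (c : ℂ) = 0 → a = 0 ∧ b = 0 ∧ c = 0)
    {μ : ℂ} (hμ : ∀ v ∈ span ℚ ({1, τ} : Set ℂ), μ * v ∈ span ℚ ({1, τ} : Set ℂ)) :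
    ∃ q : ℚ, μ = q := by
  obtain ⟨x, y, hxy⟩ := mem_span_pair.1 (by simpa using hμ 1 (subset_span (by simp)))
  obtain ⟨e, f, hef⟩ := mem_span_pair.1 (hμ τ (subset_span (by simp)))
  simp only [Rat.smul_def, mul_one] at hxy hef
  have hy := (hdeg y (x - f) (-e) (by push_cast; linear_combination τ * hxy - hef)).1
  exact ⟨x, by rw [← hxy, hy]; simp⟩

theorem mem_adjoin_of_mem_span {τ v : ℂ} (hv : v ∈ span ℚ ({1, τ} : Set ℂ)) :
    v ∈ IntermediateField.adjoin ℚ {τ, conj τ} ∧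
      conj v ∈ IntermediateField.adjoin ℚ {τ, conj τ} := by
  obtain ⟨a, b, rfl⟩ := mem_span_pair.1 hv
  have hτ := IntermediateField.subset_adjoin ℚ {τ, conj τ} (Set.mem_insert _ _)
  have hτ' := IntermediateField.subset_adjoin ℚ {τ, conj τ} (Set.mem_insert_of_mem _ rfl)
  simp only [Rat.smul_def, mul_one, map_add, map_mul, map_ratCast]
  exact ⟨add_mem (SubfieldClass.ratCast_mem _ a) (mul_mem (SubfieldClass.ratCast_mem _ b) hτ),
    add_mem (SubfieldClass.ratCast_mem _ a) (mul_mem (SubfieldClass.ratCast_mem _ b) hτ')⟩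

theorem NumberField.finite_setOf_pow_eq_one (K : Type*) [Field K] [NumberField K] :
    {x : K | ∃ n, 0 < n ∧ x ^ n = 1}.Finite := by
  refine (NumberField.Embeddings.finite_of_norm_le K ℂ 1).subset ?_
  rintro x ⟨n, hn, hx⟩
  refine ⟨.of_pow hn (hx ▸ isIntegral_one), fun φ => ?_⟩
  exact (norm_eq_one_of_pow_eq_one (by rw [← map_pow, hx, map_one]) hn.ne').le

theorem IntermediateField.finite_setOf_mem_pow_eq_one (K : IntermediateField ℚ ℂ)
    [FiniteDimensional ℚ K] : {ζ : ℂ | ζ ∈ K ∧ ∃ n, 0 < n ∧ ζ ^ n = 1}.Finite := by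
  have : NumberField K := ⟨⟩
  refine ((NumberField.finite_setOf_pow_eq_one K).image Subtype.val).subset ?_
  rintro ζ ⟨hζ, n, hn, hζn⟩
  exact ⟨⟨ζ, hζ⟩, ⟨n, hn, Subtype.ext hζn⟩, rfl⟩

theorem div_div_conj_mem_of_arg_eq {τ v₁ v₂ : ℂ} (hv₁ : v₁ ∈ span ℚ ({1, τ} : Set ℂ))
    (hv₂ : v₂ ∈ span ℚ ({1, τ} : Set ℂ)) (hv₁0 : v₁ ≠ 0) (hv₂0 : v₂ ≠ 0)
    (hne : ℝ ∙ v₁ ≠ ℝ ∙ v₂) {q : ℚ} (harg : arg (v₂ / v₁) = q * Real.pi) :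
    v₂ / v₁ / conj (v₂ / v₁) ∈ {ζ : ℂ | ζ ∈ IntermediateField.adjoin ℚ {τ, conj τ} ∧
      ∃ n, 0 < n ∧ ζ ^ n = 1} \ {1} := by
  have hz : v₂ / v₁ ≠ 0 := div_ne_zero hv₂0 hv₁0
  obtain ⟨hv₁K, hv₁K'⟩ := mem_adjoin_of_mem_span hv₁
  obtain ⟨hv₂K, hv₂K'⟩ := mem_adjoin_of_mem_span hv₂
  refine ⟨⟨div_mem (div_mem hv₂K hv₁K) (map_div₀ conj v₂ v₁ ▸ div_mem hv₂K' hv₁K'),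
    q.den, q.den_pos, div_conj_pow_den_eq_one hz harg⟩, ?_⟩
  exact mt (div_conj_eq_one_iff hz).1 (im_div_ne_zero_of_span_singleton_ne hv₁0 hv₂0 hne)

theorem finitely_many_rational_angles_in_nonCM_space_general
    (τ : ℂ) (halg : IsAlgebraic ℚ τ)
    (hdeg : ∀ a b c : ℚ, (a : ℂ) * τ ^ 2 + (b : ℂ) * τ + (c : ℂ) = 0 →
      a = 0 ∧ b = 0 ∧ c = 0) :
    Set.Finite {L : Submodule ℝ ℂ × Submodule ℝ ℂ |
      ∃ v₁ v₂ : ℂ, v₁ ≠ 0 ∧ v₂ ≠ 0 ∧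
        v₁ ∈ Submodule.span ℚ ({1, τ} : Set ℂ) ∧
        v₂ ∈ Submodule.span ℚ ({1, τ} : Set ℂ) ∧
        L.1 = Submodule.span ℝ ({v₁} : Set ℂ) ∧
        L.2 = Submodule.span ℝ ({v₂} : Set ℂ) ∧
        L.1 ≠ L.2 ∧
        ∃ q : ℚ, Complex.arg (v₂ / v₁) = (q : ℝ) * Real.pi} := by
  set V := span ℚ ({1, τ} : Set ℂ)
  set K := IntermediateField.adjoin ℚ {τ, conj τ}
  have : FiniteDimensional ℚ V := FiniteDimensional.span_of_finite ℚ (Set.toFinite _)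
  have : FiniteDimensional ℚ K := IntermediateField.finiteDimensional_adjoin_pair
    halg.isIntegral (halg.isIntegral.map (starRingEnd ℂ).toRatAlgHom)
  set Z := {ζ : ℂ | ζ ∈ K ∧ ∃ n, 0 < n ∧ ζ ^ n = 1} \ {1}
  have hT : (⋃ ζ ∈ Z, rotatableLines V ζ).Finite :=
    K.finite_setOf_mem_pow_eq_one.sdiff.biUnion fun ζ hζ =>
      finite_rotatableLines (finrank_span_pair_le 1 τ)
        (fun _ => exists_rat_eq_of_mul_mem_span hdeg) hζ.2
  refine (hT.prod hT).subset ?_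
  rintro ⟨_, _⟩ ⟨v₁, v₂, hv₁0, hv₂0, hv₁, hv₂, rfl, rfl, hne, q, harg⟩
  obtain ⟨q', harg'⟩ : ∃ q' : ℚ, arg (v₁ / v₂) = q' * Real.pi := by
    rw [← inv_div, arg_inv]
    split_ifs
    exacts [⟨1, by simp⟩, ⟨-q, by rw [harg]; push_cast; ring⟩]
  exact ⟨Set.mem_biUnion (div_div_conj_mem_of_arg_eq hv₁ hv₂ hv₁0 hv₂0 hne harg)
      ⟨v₁, hv₁, v₂, hv₂, hv₁0, hv₂0, rfl, rfl⟩,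
    Set.mem_biUnion (div_div_conj_mem_of_arg_eq hv₂ hv₁ hv₂0 hv₁0 hne.symm harg')
      ⟨v₂, hv₂, v₁, hv₁, hv₂0, hv₁0, rfl, rfl⟩⟩

/-- Let `V = ℚ·1 + ℚ·τ` with `τ ∉ ℝ` algebraic over `ℚ` of degree `> 2` (so `V` is
not CM).  Then `V` contains only finitely many rational angles: the set of pairs of
distinct lines through `0`, each containing a nonzero point of `V`, forming an angle
that is a rational multiple of `π`, is finite. -/
theorem finitely_many_rational_angles_in_nonCM_space
    (τ : ℂ) (hτ : ∀ r : ℝ, τ ≠ (r : ℂ)) (halg : IsAlgebraic ℚ τ)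
    (hdeg : ∀ a b c : ℚ, (a : ℂ) * τ ^ 2 + (b : ℂ) * τ + (c : ℂ) = 0 →
      a = 0 ∧ b = 0 ∧ c = 0) :
    Set.Finite {L : Submodule ℝ ℂ × Submodule ℝ ℂ |
      ∃ v₁ v₂ : ℂ, v₁ ≠ 0 ∧ v₂ ≠ 0 ∧
        v₁ ∈ Submodule.span ℚ ({1, τ} : Set ℂ) ∧
        v₂ ∈ Submodule.span ℚ ({1, τ} : Set ℂ) ∧
        L.1 = Submodule.span ℝ ({v₁} : Set ℂ) ∧
        L.2 = Submodule.span ℝ ({v₂} : Set ℂ) ∧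
        L.1 ≠ L.2 ∧
        ∃ q : ℚ, Complex.arg (v₂ / v₁) = (q : ℝ) * Real.pi} :=
  finitely_many_rational_angles_in_nonCM_space_general τ halg hdeg
end

section
/- Let V = Q·1 + Q·τ with τ ∈ C \ R transcendental over Q. Then, up to equivalence, V contains at most one rational angle; more precisely, if v₁, v₂, w₁, w₂ ∈ V \ {0} determine two rational angles (arg(v₂/v₁), arg(w₂/w₁) ∈ πQ, neither in πZ), then the unordered pairs of lines {Rv₁, Rv₂} and {Rw₁, Rw₂} coincide. -/
/-!
Write the elements of `V` as `ℓ_u(τ) = a + bτ` with `u = (a, b) ∈ ℚ²`, and let `σ = conj τ`. If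
`arg (v₂ / v₁) = qπ`, then `ζ = (v₂ / v₁) / conj (v₂ / v₁) = exp (2πiq)` is a root of unity, and
`v₂ · conj v₁ = ζ · v₁ · conj v₂` reads `ℓ₂(τ) ℓ₁(σ) = ζ ℓ₁(τ) ℓ₂(σ)`, where `vᵢ = ℓᵢ(τ)`; the
second angle gives `m₂(τ) m₁(σ) = ξ m₁(τ) m₂(σ)` in the same way, where `wⱼ = mⱼ(τ)` and
`mⱼ = ℓ_{uⱼ'}`. Both relations are linear in `σ`, so eliminating `σ` leaves a quadratic equation
`Φ(τ) = 0` with coefficients in `ℚ(ζ, ξ)`, and `Φ` vanishes identically because `τ` is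
transcendental. Evaluating the binary quadratic form `Φ` at the root `(b₁ : -a₁)` of `ℓ₁` gives
`(1 - ξ) [u₁, u₂] [u₁, u₁'] [u₁, u₂'] = 0`, with `[u, u']` the determinant, so `v₁` is a rational
multiple of `w₁` or of `w₂`, and likewise for `v₂`. As `v₁` and `v₂` are not proportional, they
are matched with different `wⱼ`.
-/

open Complex ComplexConjugate Real

namespace RationalAngle

section CommRing

variable {R S : Type*} [CommRing R] [Algebra ℚ R] [CommRing S] [Algebra ℚ S]

def linForm (u : ℚ × ℚ) (x : R) : R := u.1 • 1 + u.2 • x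

def cross (u u' : ℚ × ℚ) : ℚ := u.1 * u'.2 - u.2 * u'.1

/-- What remains after eliminating `σ`, by a `2 × 2` determinant, from the relations
`ℓ₂(x) ℓ₁(σ) = ζ ℓ₁(x) ℓ₂(σ)` and `m₂(x) m₁(σ) = ξ m₁(x) m₂(σ)`, where `ℓᵢ = linForm uᵢ` and
`mᵢ = linForm uᵢ'`. -/
def eliminant (u₁ u₂ u₁' u₂' : ℚ × ℚ) (ζ ξ x : R) : R :=
  cross u₁ u₁' • (linForm u₂ x * linForm u₂' x) - cross u₁ u₂' • (ξ * linForm u₂ x * linForm u₁' x)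
    - cross u₂ u₁' • (ζ * linForm u₁ x * linForm u₂' x)
    + cross u₂ u₂' • (ζ * ξ * linForm u₁ x * linForm u₁' x)

theorem exists_linForm_eq_of_mem_span {x v : R} (hv : v ∈ Submodule.span ℚ ({1, x} : Set R)) :
    ∃ u : ℚ × ℚ, linForm u x = v := by
  obtain ⟨a, b, h⟩ := Submodule.mem_span_pair.1 hv
  exact ⟨(a, b), h⟩

theorem linForm_smul (r : ℚ) (u : ℚ × ℚ) (x : R) : linForm (r • u) x = r • linForm u x := by
  simp only [linForm, Prod.smul_fst, Prod.smul_snd, smul_add, smul_smul, smul_eq_mul]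

theorem ne_zero_of_linForm_ne_zero {u : ℚ × ℚ} {x : R} (h : linForm u x ≠ 0) : u ≠ 0 := by
  rintro rfl
  simp [linForm] at h

theorem map_linForm {G : Type*} [FunLike G R S] [RingHomClass G R S] (f : G) (u : ℚ × ℚ)
    (x : R) : f (linForm u x) = linForm u (f x) := by
  simp [linForm, map_rat_smul]

theorem map_eliminant {G : Type*} [FunLike G R S] [RingHomClass G R S] (f : G)
    (u₁ u₂ u₁' u₂' : ℚ × ℚ) (ζ ξ x : R) :
    f (eliminant u₁ u₂ u₁' u₂' ζ ξ x) = eliminant u₁ u₂ u₁' u₂' (f ζ) (f ξ) (f x) := by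
  simp [eliminant, map_rat_smul, map_linForm]

end CommRing

section Cross

variable {u u' u₁ u₂ w : ℚ × ℚ}

theorem cross_anticomm : -cross u u' = cross u' u := by
  simp only [cross]
  ring

theorem exists_eq_smul_of_cross_eq_zero (hu : u ≠ 0) (h : cross u u' = 0) :
    ∃ r : ℚ, u' = r • u := by
  simp only [cross] at h
  by_cases h₁ : u.1 = 0
  · have h₂ : u.2 ≠ 0 := fun h₂ ↦ hu (Prod.ext h₁ h₂)
    refine ⟨u'.2 / u.2, Prod.ext ?_ ?_⟩ <;> simp only [Prod.smul_fst, Prod.smul_snd, smul_eq_mul]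
    · field_simp
      simpa [h₁, h₂] using h
    · field_simp
  · refine ⟨u'.1 / u.1, Prod.ext ?_ ?_⟩ <;> simp only [Prod.smul_fst, Prod.smul_snd, smul_eq_mul]
    · field_simp
    · field_simp
      linarith

theorem eq_zero_of_cross_eq_zero (hu : cross u₁ u₂ ≠ 0) (h₁ : cross u₁ w = 0)
    (h₂ : cross u₂ w = 0) : w = 0 := by
  simp only [cross] at hu h₁ h₂
  refine Prod.ext ?_ ?_
  · apply (mul_eq_zero.1 _).resolve_right hu
    linear_combination u₂.1 * h₁ - u₁.1 * h₂
  · apply (mul_eq_zero.1 _).resolve_right hu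
    linear_combination u₂.2 * h₁ - u₁.2 * h₂

theorem cross_pairing {u₁' u₂' : ℚ × ℚ} (hu : cross u₁ u₂ ≠ 0) (h₁' : u₁' ≠ 0) (h₂' : u₂' ≠ 0)
    (h₁ : cross u₁ u₁' = 0 ∨ cross u₁ u₂' = 0) (h₂ : cross u₂ u₁' = 0 ∨ cross u₂ u₂' = 0) :
    (cross u₁ u₁' = 0 ∧ cross u₂ u₂' = 0) ∨ (cross u₁ u₂' = 0 ∧ cross u₂ u₁' = 0) := by
  rcases h₁ with h₁ | h₁ <;> rcases h₂ with h₂ | h₂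
  · exact absurd (eq_zero_of_cross_eq_zero hu h₁ h₂) h₁'
  · exact .inl ⟨h₁, h₂⟩
  · exact .inr ⟨h₁, h₂⟩
  · exact absurd (eq_zero_of_cross_eq_zero hu h₁ h₂) h₂'

end Cross

section Elimination

variable {F : Type*} [Field F] [CharZero F] {u₁ u₂ u₁' u₂' : ℚ × ℚ}

theorem eliminant_eq_zero {τ σ ζ ξ : F}
    (hv : linForm u₂ τ * linForm u₁ σ = ζ * (linForm u₁ τ * linForm u₂ σ))
    (hw : linForm u₂' τ * linForm u₁' σ = ξ * (linForm u₁' τ * linForm u₂' σ)) :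
    eliminant u₁ u₂ u₁' u₂' ζ ξ τ = 0 := by
  simp only [eliminant, linForm, cross, Rat.smul_def] at *
  push_cast at *
  linear_combination ((u₁'.2 : F) * (u₂'.1 + u₂'.2 * τ) - ξ * u₂'.2 * (u₁'.1 + u₁'.2 * τ)) * hv
    - ((u₁.2 : F) * (u₂.1 + u₂.2 * τ) - ζ * u₂.2 * (u₁.1 + u₁.2 * τ)) * hw

open Polynomial in
theorem eliminant_eq_zero_of_transcendental {τ ζ ξ : F} (hτ : Transcendental ℚ τ)
    (hζ : IsAlgebraic ℚ ζ) (hξ : IsAlgebraic ℚ ξ) (h : eliminant u₁ u₂ u₁' u₂' ζ ξ τ = 0)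
    (x : F) : eliminant u₁ u₂ u₁' u₂' ζ ξ x = 0 := by
  let p : (algebraicClosure ℚ F)[X] := eliminant u₁ u₂ u₁' u₂'
    (C ⟨ζ, mem_algebraicClosure_iff.2 hζ⟩) (C ⟨ξ, mem_algebraicClosure_iff.2 hξ⟩) X
  have hp (y : F) : aeval y p = eliminant u₁ u₂ u₁' u₂' ζ ξ y := by
    simp [p, map_eliminant]
  rw [← hp, transcendental_iff.1 hτ.algebraicClosure p (by rwa [hp]), map_zero]

theorem cross_mul_cross_eq_zero {ζ ξ : F} (h : ∀ x : F, eliminant u₁ u₂ u₁' u₂' ζ ξ x = 0) :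
    (1 - ξ) * cross u₁ u₂ * (cross u₁ u₁' * cross u₁ u₂') = 0 := by
  have h₀ := h 0
  have h₁ := h 1
  have h₂ := h (-1)
  simp only [eliminant, linForm, cross, Rat.smul_def] at h₀ h₁ h₂ ⊢
  push_cast at *
  -- the homogenized quadratic form, evaluated at `(u₁.2, -u₁.1)` by interpolation at `0, 1, -1`
  linear_combination ((u₁.2 : F) ^ 2 - (u₁.1 : F) ^ 2) * h₀
    + ((u₁.1 : F) ^ 2 - u₁.1 * u₁.2) / 2 * h₁ + ((u₁.1 : F) ^ 2 + u₁.1 * u₁.2) / 2 * h₂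

theorem cross_eq_zero_or_cross_eq_zero {τ σ ζ ξ : F} (hτ : Transcendental ℚ τ)
    (hζ : IsAlgebraic ℚ ζ) (hξ : IsAlgebraic ℚ ξ) (hξ₁ : ξ ≠ 1) (hu : cross u₁ u₂ ≠ 0)
    (hv : linForm u₂ τ * linForm u₁ σ = ζ * (linForm u₁ τ * linForm u₂ σ))
    (hw : linForm u₂' τ * linForm u₁' σ = ξ * (linForm u₁' τ * linForm u₂' σ)) :
    cross u₁ u₁' = 0 ∨ cross u₁ u₂' = 0 := by
  have := cross_mul_cross_eq_zero
    (eliminant_eq_zero_of_transcendental hτ hζ hξ (eliminant_eq_zero hv hw))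
  simpa [sub_eq_zero, hξ₁.symm, hu] using this

end Elimination

theorem div_conj_eq_exp {z : ℂ} (hz : z ≠ 0) : z / conj z = exp (2 * z.arg * I) := by
  have hconj : conj z = ‖z‖ * exp (-(z.arg * I)) := by
    calc conj z = conj (‖z‖ * exp (z.arg * I)) := by rw [norm_mul_exp_arg_mul_I]
      _ = ‖z‖ * exp (-(z.arg * I)) := by
        rw [map_mul, conj_ofReal, ← exp_conj, map_mul, conj_ofReal, conj_I, mul_neg]
  rw [hconj]
  nth_rw 1 [← norm_mul_exp_arg_mul_I z]
  rw [mul_div_mul_left _ _ (by simpa using hz), ← Complex.exp_sub]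
  ring_nf

theorem isAlgebraic_div_conj {z : ℂ} (hz : z ≠ 0) {q : ℚ} (h : z.arg = q * π) :
    IsAlgebraic ℚ (z / conj z) := by
  have hexp : 2 * ((q * π : ℝ) : ℂ) * I = 2 * π * I * q := by push_cast; ring
  rw [div_conj_eq_exp hz, h, hexp]
  exact ((isPrimitiveRoot_exp_rat q).isIntegral q.pos).tower_top.isAlgebraic

theorem im_ne_zero_of_arg_ne_int_mul_pi {z : ℂ} (h : ∀ k : ℤ, z.arg ≠ k * π) : z.im ≠ 0 := by
  intro him
  rcases le_or_gt 0 z.re with hre | hre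
  · exact h 0 (by simpa using arg_eq_zero_iff.2 ⟨hre, him⟩)
  · exact h 1 (by simpa using arg_eq_pi_iff.2 ⟨hre, him⟩)

theorem exists_isAlgebraic_mul_conj_eq {v₁ v₂ : ℂ} (h₁ : v₁ ≠ 0) (h₂ : v₂ ≠ 0) {q : ℚ}
    (hq : arg (v₂ / v₁) = q * π) (hk : ∀ k : ℤ, arg (v₂ / v₁) ≠ k * π) :
    ∃ ζ : ℂ, IsAlgebraic ℚ ζ ∧ ζ ≠ 0 ∧ ζ ≠ 1 ∧ v₂ * conj v₁ = ζ * (v₁ * conj v₂) := by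
  have hz : v₂ / v₁ ≠ 0 := div_ne_zero h₂ h₁
  have hcz : conj (v₂ / v₁) ≠ 0 := (map_ne_zero _).2 hz
  refine ⟨v₂ / v₁ / conj (v₂ / v₁), isAlgebraic_div_conj hz hq, div_ne_zero hz hcz, ?_, ?_⟩
  · rw [Ne, div_eq_one_iff_eq hcz, eq_comm, conj_eq_iff_im]
    exact im_ne_zero_of_arg_ne_int_mul_pi hk
  · have : conj v₁ ≠ 0 := (map_ne_zero _).2 h₁
    have : conj v₂ ≠ 0 := (map_ne_zero _).2 h₂
    simp only [map_div₀]
    field_simp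

variable {τ : ℂ} {u₁ u₂ : ℚ × ℚ}

theorem cross_ne_zero_of_arg_ne_int_mul_pi (h₁ : linForm u₁ τ ≠ 0)
    (hk : ∀ k : ℤ, arg (linForm u₂ τ / linForm u₁ τ) ≠ k * π) : cross u₁ u₂ ≠ 0 := by
  intro h
  obtain ⟨r, rfl⟩ := exists_eq_smul_of_cross_eq_zero (ne_zero_of_linForm_ne_zero h₁) h
  apply im_ne_zero_of_arg_ne_int_mul_pi hk
  rw [linForm_smul, Rat.smul_def, mul_div_cancel_right₀ _ h₁]
  simp

theorem span_linForm_eq_of_cross_eq_zero (h : cross u₁ u₂ = 0) (h₁ : linForm u₁ τ ≠ 0)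
    (h₂ : linForm u₂ τ ≠ 0) :
    Submodule.span ℝ {linForm u₁ τ} = Submodule.span ℝ {linForm u₂ τ} := by
  obtain ⟨r, rfl⟩ := exists_eq_smul_of_cross_eq_zero (ne_zero_of_linForm_ne_zero h₁) h
  have hr : r ≠ 0 := by
    rintro rfl
    simp [linForm] at h₂
  rw [linForm_smul]
  exact (Submodule.span_singleton_group_smul_eq ℝ (Units.mk0 r hr) _).symm

end RationalAngle

open RationalAngle

theorem at_most_one_rational_angle_in_transcendental_space_general
    (τ : ℂ) (htr : Transcendental ℚ τ)
    (v₁ v₂ w₁ w₂ : ℂ)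
    (hv₁ : v₁ ∈ Submodule.span ℚ ({1, τ} : Set ℂ)) (hv₁0 : v₁ ≠ 0)
    (hv₂ : v₂ ∈ Submodule.span ℚ ({1, τ} : Set ℂ)) (hv₂0 : v₂ ≠ 0)
    (hw₁ : w₁ ∈ Submodule.span ℚ ({1, τ} : Set ℂ)) (hw₁0 : w₁ ≠ 0)
    (hw₂ : w₂ ∈ Submodule.span ℚ ({1, τ} : Set ℂ)) (hw₂0 : w₂ ≠ 0)
    (hv : ∃ q : ℚ, Complex.arg (v₂ / v₁) = (q : ℝ) * Real.pi)
    (hvnt : ∀ k : ℤ, Complex.arg (v₂ / v₁) ≠ (k : ℝ) * Real.pi)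
    (hw : ∃ q : ℚ, Complex.arg (w₂ / w₁) = (q : ℝ) * Real.pi)
    (hwnt : ∀ k : ℤ, Complex.arg (w₂ / w₁) ≠ (k : ℝ) * Real.pi) :
    (Submodule.span ℝ ({v₁} : Set ℂ) = Submodule.span ℝ ({w₁} : Set ℂ) ∧
      Submodule.span ℝ ({v₂} : Set ℂ) = Submodule.span ℝ ({w₂} : Set ℂ)) ∨
    (Submodule.span ℝ ({v₁} : Set ℂ) = Submodule.span ℝ ({w₂} : Set ℂ) ∧
      Submodule.span ℝ ({v₂} : Set ℂ) = Submodule.span ℝ ({w₁} : Set ℂ)) := by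
  obtain ⟨u₁, rfl⟩ := exists_linForm_eq_of_mem_span hv₁
  obtain ⟨u₂, rfl⟩ := exists_linForm_eq_of_mem_span hv₂
  obtain ⟨u₁', rfl⟩ := exists_linForm_eq_of_mem_span hw₁
  obtain ⟨u₂', rfl⟩ := exists_linForm_eq_of_mem_span hw₂
  obtain ⟨q, hq⟩ := hv
  obtain ⟨q', hq'⟩ := hw
  obtain ⟨ζ, hζ, hζ₀, -, hζv⟩ := exists_isAlgebraic_mul_conj_eq hv₁0 hv₂0 hq hvnt
  obtain ⟨ξ, hξ, -, hξ₁, hξw⟩ := exists_isAlgebraic_mul_conj_eq hw₁0 hw₂0 hq' hwnt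
  simp only [map_linForm] at hζv hξw
  have hu : cross u₁ u₂ ≠ 0 := cross_ne_zero_of_arg_ne_int_mul_pi hv₁0 hvnt
  have hζv' :
      linForm u₁ τ * linForm u₂ (conj τ) = ζ⁻¹ * (linForm u₂ τ * linForm u₁ (conj τ)) := by
    rw [hζv, inv_mul_cancel_left₀ hζ₀]
  have hu' : cross u₂ u₁ ≠ 0 := cross_anticomm ▸ neg_ne_zero.2 hu
  rcases cross_pairing hu (ne_zero_of_linForm_ne_zero hw₁0) (ne_zero_of_linForm_ne_zero hw₂0)
      (cross_eq_zero_or_cross_eq_zero htr hζ hξ hξ₁ hu hζv hξw)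
      (cross_eq_zero_or_cross_eq_zero htr hζ.inv hξ hξ₁ hu' hζv' hξw)
    with ⟨h₁, h₂⟩ | ⟨h₁, h₂⟩
  · exact .inl ⟨span_linForm_eq_of_cross_eq_zero h₁ hv₁0 hw₁0,
      span_linForm_eq_of_cross_eq_zero h₂ hv₂0 hw₂0⟩
  · exact .inr ⟨span_linForm_eq_of_cross_eq_zero h₁ hv₁0 hw₂0,
      span_linForm_eq_of_cross_eq_zero h₂ hv₂0 hw₁0⟩

/-- Let `V = ℚ·1 + ℚ·τ` with `τ ∉ ℝ` transcendental over `ℚ`.  Then, up to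
equivalence, `V` contains at most one rational angle: if `v₁, v₂, w₁, w₂ ∈ V \ {0}`
determine two rational angles (arguments of `v₂/v₁` and `w₂/w₁` rational multiples
of `π` but not integer multiples of `π`), then the unordered pairs of lines
`{ℝv₁, ℝv₂}` and `{ℝw₁, ℝw₂}` coincide. -/
theorem at_most_one_rational_angle_in_transcendental_space
    (τ : ℂ) (hτ : ∀ r : ℝ, τ ≠ (r : ℂ)) (htr : Transcendental ℚ τ)
    (v₁ v₂ w₁ w₂ : ℂ)
    (hv₁ : v₁ ∈ Submodule.span ℚ ({1, τ} : Set ℂ)) (hv₁0 : v₁ ≠ 0)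
    (hv₂ : v₂ ∈ Submodule.span ℚ ({1, τ} : Set ℂ)) (hv₂0 : v₂ ≠ 0)
    (hw₁ : w₁ ∈ Submodule.span ℚ ({1, τ} : Set ℂ)) (hw₁0 : w₁ ≠ 0)
    (hw₂ : w₂ ∈ Submodule.span ℚ ({1, τ} : Set ℂ)) (hw₂0 : w₂ ≠ 0)
    (hv : ∃ q : ℚ, Complex.arg (v₂ / v₁) = (q : ℝ) * Real.pi)
    (hvnt : ∀ k : ℤ, Complex.arg (v₂ / v₁) ≠ (k : ℝ) * Real.pi)
    (hw : ∃ q : ℚ, Complex.arg (w₂ / w₁) = (q : ℝ) * Real.pi)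
    (hwnt : ∀ k : ℤ, Complex.arg (w₂ / w₁) ≠ (k : ℝ) * Real.pi) :
    (Submodule.span ℝ ({v₁} : Set ℂ) = Submodule.span ℝ ({w₁} : Set ℂ) ∧
      Submodule.span ℝ ({v₂} : Set ℂ) = Submodule.span ℝ ({w₂} : Set ℂ)) ∨
    (Submodule.span ℝ ({v₁} : Set ℂ) = Submodule.span ℝ ({w₂} : Set ℂ) ∧
      Submodule.span ℝ ({v₂} : Set ℂ) = Submodule.span ℝ ({w₁} : Set ℂ)) :=
  at_most_one_rational_angle_in_transcendental_space_general τ htr v₁ v₂ w₁ w₂ hv₁ hv₁0 hv₂ hv₂0 hw₁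
    hw₁0 hw₂ hw₂0 hv hvnt hw hwnt
end

section
/- Let τ ∈ C \ R with |τ| = 1 and suppose τ is not a root of unity. Then in the space V = Q·1 + Q·τ there is no rational triple containing 1 and a vector perpendicular to 1; equivalently, if a purely imaginary nonzero w ∈ V and some v ∈ V \ (R ∪ Rw) satisfy that both arg(v) and arg(v/w) are rational multiples of π, then V is homothetic to Q + Qζ for some root of unity ζ. -/
/-!
A nonzero purely imaginary vector of `V = ℚ + ℚτ` forces `Re τ ∈ ℚ`, and then `|τ| = 1` makes
`(Im τ)²` rational, so every `v ∈ V` has `Re v ∈ ℚ` and `(Im v)² ∈ ℚ`. If moreover `arg v ∈ ℚπ`,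
then `cos (2 arg v)` is rational and Niven's theorem leaves `tan² (arg v) ∈ {1/3, 1, 3}`, that is
`Im v ∈ ℚ √m` with `m ∈ {1, 3}`. As `V = ℚ + ℚv = ℚ + ℚ i√m`, `V` is `ℚ + ℚi` or `ℚ + ℚ e^{iπ/3}`.
-/

open Complex Submodule
open scoped Real

lemma Submodule.span_pair_smul_add_smul {K M : Type*} [Field K] [AddCommGroup M] [Module K M]
    (u b : M) (x : K) {y : K} (hy : y ≠ 0) :
    span K {u, x • u + y • b} = span K {u, b} := by
  apply span_eq_span <;> rw [Set.insert_subset_iff, Set.singleton_subset_iff] <;>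
    refine ⟨subset_span (Set.mem_insert _ _), mem_span_pair.2 ?_⟩
  · exact ⟨x, y, rfl⟩
  · refine ⟨-(y⁻¹ * x), y⁻¹, ?_⟩
    rw [smul_add, smul_smul, smul_smul, inv_mul_cancel₀ hy, one_smul, neg_smul, neg_add_cancel_left]

lemma Submodule.span_pair_eq_of_mem_of_notMem {K M : Type*} [Field K] [AddCommGroup M]
    [Module K M] {u b v : M} (hv : v ∈ span K {u, b}) (hvu : v ∉ span K {u}) :
    span K {u, v} = span K {u, b} := by
  obtain ⟨x, y, rfl⟩ := mem_span_pair.1 hv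
  have hy : y ≠ 0 := by
    rintro rfl
    exact hvu (by simpa using smul_mem _ x (mem_span_singleton_self u))
  exact span_pair_smul_add_smul u b x hy

lemma exists_rat_mul_sqrt_eq_of_sq_eq {x m : ℝ} (hm : 0 ≤ m) {r : ℚ} (h : x ^ 2 = m * r ^ 2) :
    ∃ s : ℚ, x = s * √m := by
  have hsq : (x - r * √m) * (x + r * √m) = 0 := by
    linear_combination h - (r : ℝ) ^ 2 * Real.sq_sqrt hm
  rcases mul_eq_zero.1 hsq with h | h
  · exact ⟨r, by linarith⟩
  · exact ⟨-r, by push_cast; linarith⟩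

/-- Niven's theorem applied to `cos (2 θ) = (1 - tan² θ) / (1 + tan² θ)`. -/
lemma Real.tan_sq_mem_of_rat_mul_pi {θ : ℝ} (hθ : ∃ r : ℚ, θ = r * π)
    (htan : ∃ q : ℚ, Real.tan θ ^ 2 = q) (h0 : Real.tan θ ≠ 0) :
    Real.tan θ ^ 2 ∈ ({1 / 3, 1, 3} : Set ℝ) := by
  have hcos : Real.cos θ ≠ 0 := fun h => h0 (by simp [Real.tan_eq_sin_div_cos, h])
  have hcos2 : Real.cos (2 * θ) = (1 - Real.tan θ ^ 2) / (1 + Real.tan θ ^ 2) := by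
    rw [Real.cos_two_mul, ← Real.inv_one_add_tan_sq hcos]
    field_simp
    ring
  obtain ⟨q, hq⟩ := htan
  obtain ⟨r, hr⟩ := hθ
  have hniven := niven (θ := 2 * θ) ⟨2 * r, by rw [hr]; push_cast; ring⟩
    ⟨(1 - q) / (1 + q), by rw [hcos2, hq]; push_cast; rfl⟩
  have hpos : 0 < Real.tan θ ^ 2 := by positivity
  rw [hcos2] at hniven
  simp only [Set.mem_insert_iff, Set.mem_singleton_iff] at hniven ⊢
  rcases hniven with h | h | h | h | h <;> field_simp at h
  · linarith
  · right; right; linarith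
  · right; left; linarith
  · left; linarith
  · linarith

lemma Real.exists_tan_eq_rat_mul_sqrt {θ : ℝ} (hθ : ∃ r : ℚ, θ = r * π)
    (htan : ∃ q : ℚ, Real.tan θ ^ 2 = q) (h0 : Real.tan θ ≠ 0) :
    ∃ m : ℕ, (m = 1 ∨ m = 3) ∧ ∃ s : ℚ, Real.tan θ = s * √m := by
  rcases Real.tan_sq_mem_of_rat_mul_pi hθ htan h0 with h | h | h
  · exact ⟨3, .inr rfl, exists_rat_mul_sqrt_eq_of_sq_eq (r := 1 / 3) (by norm_num)
      (by rw [h]; push_cast; ring)⟩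
  · exact ⟨1, .inl rfl, exists_rat_mul_sqrt_eq_of_sq_eq (r := 1) (by norm_num)
      (by rw [h]; push_cast; ring)⟩
  · exact ⟨3, .inr rfl, exists_rat_mul_sqrt_eq_of_sq_eq (r := 1) (by norm_num)
      (by rw [h]; push_cast; ring)⟩

lemma exists_pow_eq_one_and_span_one_sqrt_mul_I_eq {m : ℕ} (hm : m = 1 ∨ m = 3) :
    ∃ ζ : ℂ, (∃ n : ℕ, 0 < n ∧ ζ ^ n = 1) ∧
      span ℚ {1, (√m : ℂ) * I} = span ℚ ({1, ζ} : Set ℂ) := by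
  rcases hm with rfl | rfl
  · exact ⟨I, ⟨4, by norm_num, I_pow_four⟩, by simp⟩
  · refine ⟨exp (π / 3 * I), ⟨6, by norm_num, ?_⟩, ?_⟩
    · rw [← exp_nat_mul, ← exp_two_pi_mul_I]
      push_cast
      ring_nf
    · have : (√(3 : ℕ) : ℂ) * I = (-1 : ℚ) • 1 + (2 : ℚ) • exp (π / 3 * I) := by
        rw [exp_mul_I, ← ofReal_ofNat, ← ofReal_div, ← ofReal_cos, ← ofReal_sin,
          Real.cos_pi_div_three, Real.sin_pi_div_three]
        simp [Rat.smul_def]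
        ring
      rw [this, span_pair_smul_add_smul _ _ _ two_ne_zero]

lemma exists_rat_eq_re_of_mem_span_of_re_eq_zero {τ w : ℂ} (hw : w ∈ span ℚ {1, τ}) (hw0 : w ≠ 0)
    (hwre : w.re = 0) : ∃ p : ℚ, τ.re = p := by
  obtain ⟨a, b, rfl⟩ := mem_span_pair.1 hw
  simp only [Rat.smul_def, add_re, mul_re, ratCast_re, ratCast_im, one_re, one_im] at hwre
  have hb : b ≠ 0 := by
    rintro rfl
    apply hw0
    simp_all [Rat.smul_def]
  refine ⟨-a / b, ?_⟩
  push_cast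
  field_simp
  linarith

lemma exists_rat_re_and_im_sq_of_mem_span {τ v : ℂ} {p : ℚ} (hp : τ.re = p) (habs : ‖τ‖ = 1)
    (hv : v ∈ span ℚ {1, τ}) : (∃ c : ℚ, v.re = c) ∧ ∃ e : ℚ, v.im ^ 2 = e := by
  obtain ⟨a, b, rfl⟩ := mem_span_pair.1 hv
  have him : τ.im ^ 2 = 1 - p ^ 2 := by rw [← sq_norm_sub_sq_re, habs, hp]; ring
  refine ⟨⟨a + b * p, by simp [Rat.smul_def, hp]⟩, ⟨b ^ 2 * (1 - p ^ 2), ?_⟩⟩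
  simp [Rat.smul_def, mul_pow, him]

theorem rational_triple_with_perpendicular_implies_superrectangular_general
    (τ : ℂ) (habs : ‖τ‖ = 1)
    (w v : ℂ)
    (hw : w ∈ Submodule.span ℚ ({1, τ} : Set ℂ)) (hw0 : w ≠ 0) (hwim : w.re = 0)
    (hv : v ∈ Submodule.span ℚ ({1, τ} : Set ℂ))
    (hvR : ∀ r : ℝ, v ≠ (r : ℂ)) (hvw : ∀ r : ℝ, v ≠ (r : ℂ) * w)
    (harg1 : ∃ q : ℚ, Complex.arg v = (q : ℝ) * Real.pi) :
    ∃ (ζ l : ℂ), (∃ n : ℕ, 0 < n ∧ ζ ^ n = 1) ∧ l ≠ 0 ∧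
      (fun z : ℂ => l * z) '' (Submodule.span ℚ ({1, τ} : Set ℂ) : Set ℂ) =
        (Submodule.span ℚ ({1, ζ} : Set ℂ) : Set ℂ) := by
  obtain ⟨p, hp⟩ := exists_rat_eq_re_of_mem_span_of_re_eq_zero hw hw0 hwim
  obtain ⟨⟨c, hc⟩, e, he⟩ := exists_rat_re_and_im_sq_of_mem_span hp habs hv
  have hv_notMem : v ∉ span ℚ {(1 : ℂ)} := fun h => by
    obtain ⟨q, rfl⟩ := mem_span_singleton.1 h
    exact hvR q (by simp [Rat.smul_def])
  have hvim : v.im ≠ 0 := fun h => hvR v.re (Complex.ext (by simp) (by simp [h]))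
  have hwim0 : w.im ≠ 0 := fun h => hw0 (Complex.ext hwim h)
  have hvre : v.re ≠ 0 := fun h => hvw (v.im / w.im) (Complex.ext (by simp [h, hwim])
    (by simp [hwim, hwim0]))
  obtain ⟨m, hm, s, hs⟩ := Real.exists_tan_eq_rat_mul_sqrt harg1
    ⟨e / c ^ 2, by rw [tan_arg, div_pow, he, hc]; push_cast; rfl⟩
    (by rw [tan_arg]; exact div_ne_zero hvim hvre)
  obtain ⟨ζ, hζ, hspan⟩ := exists_pow_eq_one_and_span_one_sqrt_mul_I_eq hm
  refine ⟨ζ, 1, hζ, one_ne_zero, ?_⟩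
  have hc0 : c ≠ 0 := by rintro rfl; simp [hc] at hvre
  have hs0 : s ≠ 0 := by rintro rfl; simp [tan_arg, hvim, hvre] at hs
  have hv_eq : v = (c : ℚ) • 1 + (c * s) • ((√m : ℂ) * I) := by
    rw [tan_arg, div_eq_iff hvre] at hs
    apply Complex.ext
    · simp [Rat.smul_def, hc]
    · simp [Rat.smul_def, hc, hs]; ring
  simp only [one_mul, Set.image_id']
  rw [← span_pair_eq_of_mem_of_notMem hv hv_notMem, hv_eq,
    span_pair_smul_add_smul _ _ _ (mul_ne_zero hc0 hs0), hspan]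

/-- Let `τ ∈ ℂ \ ℝ` with `|τ| = 1` and `τ` not a root of unity, and let
`V = ℚ·1 + ℚ·τ`.  If a purely imaginary nonzero `w ∈ V` and some
`v ∈ V \ (ℝ ∪ ℝw)` satisfy that both `arg v` and `arg (v/w)` are rational
multiples of `π`, then `V` is homothetic to `ℚ·1 + ℚ·ζ` for some root of
unity `ζ`. -/
theorem rational_triple_with_perpendicular_implies_superrectangular
    (τ : ℂ) (hτ : ∀ r : ℝ, τ ≠ (r : ℂ)) (habs : ‖τ‖ = 1)
    (hnru : ∀ n : ℕ, 0 < n → τ ^ n ≠ 1)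
    (w v : ℂ)
    (hw : w ∈ Submodule.span ℚ ({1, τ} : Set ℂ)) (hw0 : w ≠ 0) (hwim : w.re = 0)
    (hv : v ∈ Submodule.span ℚ ({1, τ} : Set ℂ))
    (hvR : ∀ r : ℝ, v ≠ (r : ℂ)) (hvw : ∀ r : ℝ, v ≠ (r : ℂ) * w)
    (harg1 : ∃ q : ℚ, Complex.arg v = (q : ℝ) * Real.pi)
    (harg2 : ∃ q : ℚ, Complex.arg (v / w) = (q : ℝ) * Real.pi) :
    ∃ (ζ l : ℂ), (∃ n : ℕ, 0 < n ∧ ζ ^ n = 1) ∧ l ≠ 0 ∧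
      (fun z : ℂ => l * z) '' (Submodule.span ℚ ({1, τ} : Set ℂ) : Set ℂ) =
        (Submodule.span ℚ ({1, ζ} : Set ℂ) : Set ℂ) :=
  rational_triple_with_perpendicular_implies_superrectangular_general τ habs w v hw hw0 hwim hv hvR
    hvw harg1
end

section
/- Let θ be a root of unity with θ ∉ Q(√−3) and θ ≠ ±1, and let a ∈ Q with a ≠ 0, ±1. Then there is no root of unity x ≠ 1 such that θ − x/θ − a x + a = 0. Consequently, in a superrectangular space V = Q·1 + Q·θ not homothetic to Q(√−3), the rational 4-tuple (1, θ, θ+1, θ−1) cannot be extended to a rational 5-tuple (1, θ, θ+1, θ−1, θ+a). -/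
/-!
Put `ψ = -x/θ` and `b = -a`, so that the equation reads `θ + ψ = b (1 + θψ)`. If `1 + θψ = 0`
then `θ = ±1`. Otherwise, in a number field of degree `d` containing `θ` and `ψ`, the norms of
`θ + ψ` and `1 + θψ` are nonzero integers of absolute value at most `2^d`, since every conjugate
is a sum of two numbers of modulus one, and the first is `b^d` times the second. Hence the
numerator and denominator of `b` are at most `2`, so `b = ±2` and the first norm is `±2^d`, or
`b = ±1/2` and the second one is. Equality in the bound forces every conjugate of the sum to
have modulus `2`, so `θ = ψ`, resp. `θψ = 1`, and in both cases `θ² ∓ θ + 1 = 0`: `θ` is a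
sixth root of unity, hence lies in `ℚ(√-3)`.

If `arg (θ + a)` is a rational multiple of `π`, then `x = (θ + a) / conj (θ + a)` is a root of
unity, different from `1` because `θ` is not real, and it solves the equation since
`conj θ = θ⁻¹`.
-/

open Complex ComplexConjugate IntermediateField Module

theorem Rat.abs_num_le_and_den_le_of_intCast_eq_pow_mul {b : ℚ} (hb : b ≠ 0) {n c : ℕ}
    (hn : n ≠ 0) {P Q : ℤ} (hQ : Q ≠ 0) (hPb : |P| ≤ (c : ℤ) ^ n) (hQb : |Q| ≤ (c : ℤ) ^ n)
    (h : (P : ℚ) = b ^ n * Q) : |b.num| ≤ c ∧ b.den ≤ c := by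
  have hP : P ≠ 0 := by
    rintro rfl
    simp_all
  have hbn : b ^ n = Rat.divInt P Q := by
    rw [Rat.divInt_eq_div, h, mul_div_cancel_right₀ _ (Int.cast_ne_zero.mpr hQ)]
  have hnum : b.num ^ n ∣ P := by
    rw [← Rat.num_pow, hbn]
    exact Rat.num_dvd P hQ
  have hden : (b.den : ℤ) ^ n ∣ Q := by
    rw [← Nat.cast_pow, ← Rat.den_pow, hbn]
    exact Rat.den_dvd P Q
  constructor
  · have : |b.num| ^ n ≤ (c : ℤ) ^ n := calc
      |b.num| ^ n = |b.num ^ n| := (abs_pow _ _).symm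
      _ ≤ |P| := Int.le_of_dvd (abs_pos.mpr hP) ((abs_dvd_abs _ _).mpr hnum)
      _ ≤ (c : ℤ) ^ n := hPb
    exact (pow_le_pow_iff_left₀ (abs_nonneg _) (by positivity) hn).mp this
  · have : (b.den : ℤ) ^ n ≤ (c : ℤ) ^ n :=
      (Int.le_of_dvd (abs_pos.mpr hQ) ((dvd_abs _ _).mpr hden)).trans hQb
    exact_mod_cast (pow_le_pow_iff_left₀ (by positivity) (by positivity) hn).mp this

theorem Rat.abs_eq_two_or_half_of_abs_num_le_of_den_le {b : ℚ} (hb0 : b ≠ 0) (hb1 : b ≠ 1)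
    (hb1' : b ≠ -1) (hnum : |b.num| ≤ 2) (hden : b.den ≤ 2) : |b| = 2 ∨ |b| = 1 / 2 := by
  have hb : b = b.num / b.den := (Rat.num_div_den b).symm
  have hden₁ : 1 ≤ b.den := b.den_pos
  obtain ⟨hnum₁, hnum₂⟩ := abs_le.mp hnum
  generalize b.num = p at *
  generalize b.den = q at *
  subst hb
  interval_cases p <;> interval_cases q <;> norm_num at *

theorem Rat.abs_eq_two_or_half_of_intCast_eq_pow_mul {b : ℚ} (hb0 : b ≠ 0) (hb1 : b ≠ 1)
    (hb1' : b ≠ -1) {n : ℕ} (hn : n ≠ 0) {P Q : ℤ} (hQ : Q ≠ 0) (hPb : |P| ≤ 2 ^ n)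
    (hQb : |Q| ≤ 2 ^ n) (h : (P : ℚ) = b ^ n * Q) :
    (|b| = 2 ∧ |P| = 2 ^ n) ∨ (|b| = 1 / 2 ∧ |Q| = 2 ^ n) := by
  have hP : P ≠ 0 := by
    rintro rfl
    simp_all
  have habs : ((|P| : ℤ) : ℚ) = |b| ^ n * |Q| := by push_cast; rw [h, abs_mul, abs_pow]
  obtain ⟨hnum, hden⟩ :=
    abs_num_le_and_den_le_of_intCast_eq_pow_mul (c := 2) hb0 hn hQ hPb hQb h
  rcases abs_eq_two_or_half_of_abs_num_le_of_den_le hb0 hb1 hb1' hnum hden with hb | hb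
  · have : |P| = 2 ^ n * |Q| := by rw [hb] at habs; exact_mod_cast habs
    refine .inl ⟨hb, le_antisymm hPb ?_⟩
    rw [this]
    exact le_mul_of_one_le_right (by positivity) (Int.one_le_abs hQ)
  · have : |Q| = 2 ^ n * |P| := by
      rw [hb, div_pow, one_pow] at habs
      have : ((|Q| : ℤ) : ℚ) = 2 ^ n * |P| := by rw [habs]; field_simp
      exact_mod_cast this
    refine .inr ⟨hb, le_antisymm hQb ?_⟩
    rw [this]
    exact le_mul_of_one_le_right (by positivity) (Int.one_le_abs hP)

theorem eq_of_norm_eq_one_of_norm_add_eq_two {E : Type*} [NormedAddCommGroup E]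
    [NormedSpace ℝ E] [StrictConvexSpace ℝ E] {u v : E} (hu : ‖u‖ = 1) (hv : ‖v‖ = 1)
    (h : ‖u + v‖ = 2) : u = v :=
  (sameRay_iff_norm_add.mpr (by rw [h, hu, hv]; norm_num)).eq_of_norm_eq (hu.trans hv.symm)

theorem IsOfFinOrder.isIntegral {R : Type*} [CommRing R] {x : R} (hx : IsOfFinOrder x) :
    IsIntegral ℤ x :=
  (IsPrimitiveRoot.orderOf x).isIntegral hx.orderOf_pos

theorem IsOfFinOrder.inv₀ {G₀ : Type*} [GroupWithZero G₀] {x : G₀} (hx : IsOfFinOrder x) :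
    IsOfFinOrder x⁻¹ := by
  obtain ⟨n, hn, hxn⟩ := isOfFinOrder_iff_pow_eq_one.mp hx
  exact isOfFinOrder_iff_pow_eq_one.mpr ⟨n, hn, by rw [inv_pow, hxn, inv_one]⟩

theorem pow_six_eq_one_of_sq_add_mul_add_one_eq_zero {R : Type*} [CommRing R] {θ e : R}
    (he : e ^ 2 = 1) (h : θ ^ 2 + e * θ + 1 = 0) : θ ^ 6 = 1 := by
  linear_combination (θ - e) * (θ ^ 3 + e) * h + (θ ^ 4 + e * θ + 1) * he

namespace NumberField

variable {K : Type*} [Field K] [NumberField K]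

theorem norm_norm_le_norm_embedding_mul_pow {x : K} {c : ℝ}
    (hc : ∀ φ : K →+* ℂ, ‖φ x‖ ≤ c) (φ : K →+* ℂ) :
    ‖Algebra.norm ℚ x‖ ≤ ‖φ x‖ * c ^ (finrank ℚ K - 1) :=
  (norm_norm_le_norm_mul_house_pow x φ).trans <| by
    have hhouse : house x ≤ c := (canonicalEmbedding.norm_le_iff x c).mpr hc
    gcongr
    exact house_nonneg x

theorem norm_norm_le_pow_finrank {x : K} {c : ℝ} (hc : ∀ φ : K →+* ℂ, ‖φ x‖ ≤ c) :
    ‖Algebra.norm ℚ x‖ ≤ c ^ finrank ℚ K := by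
  obtain ⟨φ⟩ := (inferInstance : Nonempty (K →+* ℂ))
  have hc₀ : 0 ≤ c := (norm_nonneg _).trans (hc φ)
  calc ‖Algebra.norm ℚ x‖ ≤ ‖φ x‖ * c ^ (finrank ℚ K - 1) :=
        norm_norm_le_norm_embedding_mul_pow hc φ
    _ ≤ c * c ^ (finrank ℚ K - 1) := by gcongr; exact hc φ
    _ = c ^ finrank ℚ K := by rw [mul_comm, pow_sub_one_mul finrank_pos.ne']

theorem norm_embedding_eq_of_norm_norm_eq {x : K} {c : ℝ} (hc : ∀ φ : K →+* ℂ, ‖φ x‖ ≤ c)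
    (hN : ‖Algebra.norm ℚ x‖ = c ^ finrank ℚ K) (φ : K →+* ℂ) : ‖φ x‖ = c := by
  refine le_antisymm (hc φ) ?_
  rcases (norm_nonneg (φ x)).trans (hc φ) |>.eq_or_lt with hc₀ | hc₀
  · exact hc₀ ▸ norm_nonneg _
  have h := norm_norm_le_norm_embedding_mul_pow hc φ
  rw [hN, ← pow_sub_one_mul finrank_pos.ne', mul_comm] at h
  exact le_of_mul_le_mul_right h (by positivity)

theorem norm_embedding_add_le_two {θ ψ : K} (hθ : IsOfFinOrder θ) (hψ : IsOfFinOrder ψ)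
    (φ : K →+* ℂ) : ‖φ (θ + ψ)‖ ≤ 2 := by
  have hφθ : ‖φ θ‖ = 1 := (φ.toMonoidHom.isOfFinOrder hθ).norm_eq_one
  have hφψ : ‖φ ψ‖ = 1 := (φ.toMonoidHom.isOfFinOrder hψ).norm_eq_one
  rw [map_add]
  exact (norm_add_le _ _).trans (by rw [hφθ, hφψ]; norm_num)

theorem exists_intCast_eq_norm_add_and_abs_le_two_pow {θ ψ : K} (hθ : IsOfFinOrder θ)
    (hψ : IsOfFinOrder ψ) :
    ∃ z : ℤ, (z : ℚ) = Algebra.norm ℚ (θ + ψ) ∧ |z| ≤ 2 ^ finrank ℚ K := by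
  obtain ⟨z, hz⟩ : ∃ z : ℤ, (z : ℚ) = Algebra.norm ℚ (θ + ψ) :=
    ⟨_, Algebra.coe_norm_int ⟨θ + ψ, hθ.isIntegral.add hψ.isIntegral⟩⟩
  refine ⟨z, hz, ?_⟩
  have h := norm_norm_le_pow_finrank (norm_embedding_add_le_two hθ hψ)
  rw [← hz, Int.norm_cast_rat, Int.norm_eq_abs] at h
  exact_mod_cast h

theorem eq_of_intCast_eq_norm_add_of_abs_eq_two_pow {θ ψ : K} (hθ : IsOfFinOrder θ)
    (hψ : IsOfFinOrder ψ) {z : ℤ} (hz : (z : ℚ) = Algebra.norm ℚ (θ + ψ))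
    (h : |z| = 2 ^ finrank ℚ K) : θ = ψ := by
  obtain ⟨φ⟩ := (inferInstance : Nonempty (K →+* ℂ))
  have hφ := norm_embedding_eq_of_norm_norm_eq (norm_embedding_add_le_two hθ hψ)
    (by rw [← hz, Int.norm_cast_rat, Int.norm_eq_abs]; exact_mod_cast h) φ
  rw [map_add] at hφ
  exact φ.injective <| eq_of_norm_eq_one_of_norm_add_eq_two
    (φ.toMonoidHom.isOfFinOrder hθ).norm_eq_one (φ.toMonoidHom.isOfFinOrder hψ).norm_eq_one hφ

theorem pow_six_eq_one_of_add_eq_mul_one_add_mul {θ ψ : K} (hθ : IsOfFinOrder θ)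
    (hψ : IsOfFinOrder ψ) {b : ℚ} (hb0 : b ≠ 0) (hb1 : b ≠ 1) (hb1' : b ≠ -1)
    (h : θ + ψ = b * (1 + θ * ψ)) : θ ^ 6 = 1 := by
  by_cases hB : 1 + θ * ψ = 0
  · have hθ2 : θ ^ 2 = 1 := by linear_combination θ * h + (θ * b - 1) * hB
    linear_combination (θ ^ 4 + θ ^ 2 + 1) * hθ2
  have hθψ := hθ.mul hψ
  obtain ⟨P, hP, hPb⟩ := exists_intCast_eq_norm_add_and_abs_le_two_pow hθ hψ
  obtain ⟨Q, hQ, hQb⟩ := exists_intCast_eq_norm_add_and_abs_le_two_pow IsOfFinOrder.one hθψ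
  have hPQ : (P : ℚ) = b ^ finrank ℚ K * Q := by
    rw [hP, hQ, h, map_mul, ← eq_ratCast (algebraMap ℚ K), Algebra.norm_algebraMap]
  have hQ0 : Q ≠ 0 := by
    rintro rfl
    exact hB (Algebra.norm_eq_zero_iff.mp (by exact_mod_cast hQ.symm))
  rcases Rat.abs_eq_two_or_half_of_intCast_eq_pow_mul hb0 hb1 hb1' finrank_pos.ne' hQ0 hPb hQb
    hPQ with ⟨hb, hP2⟩ | ⟨hb, hQ2⟩
  · obtain rfl : θ = ψ := eq_of_intCast_eq_norm_add_of_abs_eq_two_pow hθ hψ hP hP2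
    have hb2 : (b : K) ^ 2 = 4 := by
      rw [← Rat.cast_pow, ← sq_abs, hb]
      norm_num
    refine pow_six_eq_one_of_sq_add_mul_add_one_eq_zero (e := -b / 2) ?_ ?_
    · linear_combination hb2 / 4
    · linear_combination -(b / 4) * h - (1 + θ ^ 2) / 4 * hb2
  · have h1 : 1 = θ * ψ :=
      eq_of_intCast_eq_norm_add_of_abs_eq_two_pow IsOfFinOrder.one hθψ hQ hQ2
    have hb2 : (b : K) ^ 2 = 1 / 4 := by
      rw [← Rat.cast_pow, ← sq_abs, hb]
      norm_num
    refine pow_six_eq_one_of_sq_add_mul_add_one_eq_zero (e := -2 * b) ?_ ?_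
    · linear_combination 4 * hb2
    · linear_combination θ * h + (1 - b * θ) * h1

end NumberField

theorem Complex.pow_six_eq_one_of_add_eq_mul_one_add_mul {θ ψ : ℂ} (hθ : IsOfFinOrder θ)
    (hψ : IsOfFinOrder ψ) {b : ℚ} (hb0 : b ≠ 0) (hb1 : b ≠ 1) (hb1' : b ≠ -1)
    (h : θ + ψ = b * (1 + θ * ψ)) : θ ^ 6 = 1 := by
  have := finiteDimensional_adjoin_pair (hθ.isIntegral.tower_top (A := ℚ))
    (hψ.isIntegral.tower_top (A := ℚ))
  have : NumberField ℚ⟮θ, ψ⟯ := ⟨⟩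
  let ι := (algebraMap ℚ⟮θ, ψ⟯ ℂ).toMonoidHom
  have hι : Function.Injective ι := (algebraMap ℚ⟮θ, ψ⟯ ℂ).injective
  -- `ι` is the identity on underlying elements, so `hι h` is `h` read in `ℚ⟮θ, ψ⟯`.
  have := NumberField.pow_six_eq_one_of_add_eq_mul_one_add_mul
    (hι.isOfFinOrder_iff.mp hθ) (hι.isOfFinOrder_iff.mp hψ) hb0 hb1 hb1'
    (θ := AdjoinPair.gen₁ ℚ θ ψ) (ψ := AdjoinPair.gen₂ ℚ θ ψ) (hι h)
  exact congrArg ι this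

theorem Complex.pow_six_eq_one_of_unit_equation {θ x : ℂ} (hθ : IsOfFinOrder θ)
    (hx : IsOfFinOrder x) {a : ℚ} (ha0 : a ≠ 0) (ha1 : a ≠ 1) (ha1' : a ≠ -1)
    (h : θ - x / θ - a * x + a = 0) : θ ^ 6 = 1 := by
  have hθ0 : θ ≠ 0 := hθ.isUnit.ne_zero
  have hneg : IsOfFinOrder (-1 : ℂ) :=
    isOfFinOrder_iff_pow_eq_one.mpr ⟨2, two_pos, by norm_num⟩
  refine pow_six_eq_one_of_add_eq_mul_one_add_mul hθ ((hneg.mul hx).mul hθ.inv₀) (b := -a)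
    (neg_ne_zero.mpr ha0) (by contrapose! ha1'; linarith) (by contrapose! ha1; linarith) ?_
  rw [div_eq_mul_inv] at h
  push_cast
  linear_combination h - a * x * mul_inv_cancel₀ hθ0

theorem mem_span_one_sqrt_three_mul_I_of_pow_six_eq_one {θ : ℂ} (h : θ ^ 6 = 1) :
    θ ∈ Submodule.span ℚ ({1, (Real.sqrt 3 : ℂ) * I} : Set ℂ) := by
  set w : ℂ := (Real.sqrt 3 : ℂ) * I
  have hw : w ^ 2 = -3 := by
    rw [mul_pow, I_sq, ← ofReal_pow, Real.sq_sqrt (by norm_num)]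
    norm_num
  suffices ∃ c d : ℚ, θ = c + d * w by
    obtain ⟨c, d, rfl⟩ := this
    exact Submodule.mem_span_pair.mpr ⟨c, d, by simp [Rat.smul_def]⟩
  have key : (θ - 1) * (θ + 1) * (2 * θ + 1 - w) * (2 * θ + 1 + w) * (2 * θ - 1 - w) *
      (2 * θ - 1 + w) = 0 := by
    linear_combination
      16 * h + (θ ^ 2 - 1) * (w ^ 2 - 3 - (2 * θ + 1) ^ 2 - (2 * θ - 1) ^ 2) * hw
  simp only [mul_eq_zero] at key
  rcases key with (((((h | h) | h) | h) | h) | h)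
  exacts [⟨1, 0, by push_cast; linear_combination h⟩,
    ⟨-1, 0, by push_cast; linear_combination h⟩,
    ⟨-1 / 2, 1 / 2, by push_cast; linear_combination h / 2⟩,
    ⟨-1 / 2, -1 / 2, by push_cast; linear_combination h / 2⟩,
    ⟨1 / 2, 1 / 2, by push_cast; linear_combination h / 2⟩,
    ⟨1 / 2, -1 / 2, by push_cast; linear_combination h / 2⟩]

theorem Complex.sq_eq_one_of_norm_eq_one_of_im_eq_zero {z : ℂ} (hz : ‖z‖ = 1)
    (him : z.im = 0) : z ^ 2 = 1 := by
  have h := Complex.sq_norm z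
  rw [hz, normSq_apply, him] at h
  apply Complex.ext <;> simp [sq, him]
  linarith

theorem Complex.isOfFinOrder_div_conj_of_arg_eq_rat_mul_pi {v : ℂ} (hv : v ≠ 0) {q : ℚ}
    (h : arg v = q * Real.pi) : IsOfFinOrder (v / conj v) := by
  have hu : IsOfFinOrder (exp (arg v * I)) := by
    refine isOfFinOrder_iff_pow_eq_one.mpr ⟨2 * q.den, by positivity, ?_⟩
    have hnum : (q.num : ℂ) = q * q.den := by exact_mod_cast (Rat.mul_den_eq_num q).symm
    rw [← exp_nat_mul, h, ← exp_int_mul_two_pi_mul_I q.num, hnum]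
    push_cast
    ring_nf
  have hv' : (‖v‖ : ℂ) ≠ 0 := by exact_mod_cast norm_ne_zero_iff.mpr hv
  have hconj : conj v = ‖v‖ * exp (-(arg v * I)) := by
    conv_lhs => rw [← norm_mul_exp_arg_mul_I v]
    rw [map_mul, conj_ofReal, ← exp_conj, map_mul, conj_ofReal, conj_I, mul_neg]
  have hdiv : v / conj v = exp (arg v * I) ^ 2 := by
    rw [hconj, exp_neg]
    nth_rw 1 [← norm_mul_exp_arg_mul_I v]
    field_simp
  exact hdiv ▸ hu.pow

theorem Complex.div_conj_solves_unit_equation {θ : ℂ} (hθ : ‖θ‖ = 1) {a : ℝ}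
    (hv : θ + a ≠ 0) :
    θ - (θ + a) / conj (θ + a) / θ - a * ((θ + a) / conj (θ + a)) + a = 0 := by
  have hc : conj (θ + a) = θ⁻¹ + a := by rw [map_add, conj_ofReal, ← inv_eq_conj hθ]
  have hv' : θ⁻¹ + a ≠ 0 := hc ▸ (map_ne_zero _).mpr hv
  rw [hc]
  linear_combination -div_mul_cancel₀ (θ + a) hv'

theorem no_five_tuple_in_superrectangular_general
    (θ : ℂ) (hru : ∃ n : ℕ, 0 < n ∧ θ ^ n = 1)
    (hθ : θ ∉ Submodule.span ℚ ({1, (Real.sqrt 3 : ℂ) * Complex.I} : Set ℂ))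
    (a : ℚ) (ha0 : a ≠ 0) (ha1 : a ≠ 1) (ha1' : a ≠ -1) :
    (¬ ∃ x : ℂ, (∃ n : ℕ, 0 < n ∧ x ^ n = 1) ∧ x ≠ 1 ∧
        θ - x / θ - (a : ℂ) * x + (a : ℂ) = 0) ∧
    ¬ (∀ u ∈ ({1, θ, θ + 1, θ - 1, θ + (a : ℂ)} : Set ℂ),
        ∀ v ∈ ({1, θ, θ + 1, θ - 1, θ + (a : ℂ)} : Set ℂ), u ≠ v →
          (∀ r : ℝ, v ≠ (r : ℂ) * u) ∧
          ∃ q : ℚ, Complex.arg (v / u) = (q : ℝ) * Real.pi) := by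
  have hθ6 : θ ^ 6 ≠ 1 := fun h => hθ (mem_span_one_sqrt_three_mul_I_of_pow_six_eq_one h)
  have hθfin : IsOfFinOrder θ := isOfFinOrder_iff_pow_eq_one.mpr hru
  have hθim : θ.im ≠ 0 := fun h => hθ6 <| by
    rw [show 6 = 2 * 3 by rfl, pow_mul,
      sq_eq_one_of_norm_eq_one_of_im_eq_zero hθfin.norm_eq_one h, one_pow]
  have no_solution : ¬ ∃ x : ℂ, (∃ n : ℕ, 0 < n ∧ x ^ n = 1) ∧ x ≠ 1 ∧
      θ - x / θ - (a : ℂ) * x + (a : ℂ) = 0 := by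
    rintro ⟨x, hx, -, h⟩
    exact hθ6 (pow_six_eq_one_of_unit_equation hθfin (isOfFinOrder_iff_pow_eq_one.mpr hx)
      ha0 ha1 ha1' h)
  refine ⟨no_solution, fun H => no_solution ?_⟩
  have hvim : (θ + (a : ℂ)).im ≠ 0 := by simpa using hθim
  have hv0 : θ + (a : ℂ) ≠ 0 := fun h => hvim (by rw [h, zero_im])
  have hv : conj (θ + (a : ℂ)) ≠ 0 := (map_ne_zero _).mpr hv0
  obtain ⟨-, q, hq⟩ := H 1 (by simp) (θ + a) (by simp) fun h => hvim (by simp [← h])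
  rw [div_one] at hq
  refine ⟨(θ + a) / conj (θ + a), isOfFinOrder_iff_pow_eq_one.mp
    (isOfFinOrder_div_conj_of_arg_eq_rat_mul_pi hv0 hq), ?_, ?_⟩
  · rw [Ne, div_eq_one_iff_eq hv]
    exact fun h => hvim (conj_eq_iff_im.mp h.symm)
  · simpa using div_conj_solves_unit_equation hθfin.norm_eq_one (a := a) (by simpa using hv0)

/-- Let `θ` be a root of unity, `θ ∉ ℚ(√−3)`, `θ ≠ ±1`, and let `a ∈ ℚ`,
`a ≠ 0, ±1`.  Then there is no root of unity `x ≠ 1` with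
`θ − x/θ − a·x + a = 0`; consequently, in the superrectangular space
`V = ℚ·1 + ℚ·θ`, the rational 4-tuple `(1, θ, θ+1, θ−1)` cannot be extended to a
rational 5-tuple `(1, θ, θ+1, θ−1, θ+a)`. -/
theorem no_five_tuple_in_superrectangular
    (θ : ℂ) (hru : ∃ n : ℕ, 0 < n ∧ θ ^ n = 1)
    (hθ : θ ∉ Submodule.span ℚ ({1, (Real.sqrt 3 : ℂ) * Complex.I} : Set ℂ))
    (hθ1 : θ ≠ 1) (hθ1' : θ ≠ -1)
    (a : ℚ) (ha0 : a ≠ 0) (ha1 : a ≠ 1) (ha1' : a ≠ -1) :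
    (¬ ∃ x : ℂ, (∃ n : ℕ, 0 < n ∧ x ^ n = 1) ∧ x ≠ 1 ∧
        θ - x / θ - (a : ℂ) * x + (a : ℂ) = 0) ∧
    ¬ (∀ u ∈ ({1, θ, θ + 1, θ - 1, θ + (a : ℂ)} : Set ℂ),
        ∀ v ∈ ({1, θ, θ + 1, θ - 1, θ + (a : ℂ)} : Set ℂ), u ≠ v →
          (∀ r : ℝ, v ≠ (r : ℂ) * u) ∧
          ∃ q : ℚ, Complex.arg (v / u) = (q : ℝ) * Real.pi) :=
  no_five_tuple_in_superrectangular_general θ hru hθ a ha0 ha1 ha1'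
end

section
/- Let τ₁ = (i+1)(√3 − 1)/2 and V = Q·1 + Q·τ₁ ⊂ C. Then the four vectors 1, τ₁, τ₁+1, τ₁−1 form a rational 4-tuple: arg(τ₁) = π/4, arg(τ₁+1) = π/12, and arg(τ₁−1) = 5π/6, so the argument of the ratio of any two of the four vectors is a rational multiple of π. -/
/-! Writing each of `τ₁`, `τ₁ + 1`, `τ₁ - 1` as `r (cos θ + i sin θ)` with `r > 0` reads off its
argument, using `cos (π/12) = √2 (1 + √3)/4` and `sin (π/12) = √2 (√3 - 1)/4` from
`π/12 = π/3 - π/4`. Arguments of quotients agree with differences of arguments modulo `2π`, so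
rational multiples of `π` stay rational multiples of `π`. -/

open Real Complex

namespace Complex

theorem exists_rat_arg_div_eq_mul_pi {u v : ℂ} {qu qv : ℚ} (hu : arg u = qu * π)
    (hv : arg v = qv * π) : ∃ q : ℚ, arg (v / u) = q * π := by
  rcases eq_or_ne u 0 with rfl | hu₀
  · exact ⟨0, by simp⟩
  rcases eq_or_ne v 0 with rfl | hv₀
  · exact ⟨0, by simp⟩
  have h := arg_div_coe_angle hv₀ hu₀
  rw [hu, hv, ← Real.Angle.coe_sub, Real.Angle.angle_eq_iff_two_pi_dvd_sub] at h
  obtain ⟨k, hk⟩ := h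
  exact ⟨qv - qu + 2 * k, by push_cast; linarith⟩

theorem arg_eq_of_eq_mul_cos_add_sin_mul_I {z : ℂ} {r θ : ℝ} (hr : 0 < r)
    (hθ : θ ∈ Set.Ioc (-π) π) (hz : z = r * (Real.cos θ + Real.sin θ * I)) : arg z = θ := by
  rw [hz, ofReal_cos, ofReal_sin]
  exact arg_mul_cos_add_sin_mul_I hr hθ

end Complex

namespace Real

theorem cos_pi_div_twelve : cos (π / 12) = √2 * (1 + √3) / 4 := by
  rw [show π / 12 = π / 3 - π / 4 by ring, cos_sub, cos_pi_div_four, sin_pi_div_four,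
    cos_pi_div_three, sin_pi_div_three]
  ring

theorem sin_pi_div_twelve : sin (π / 12) = √2 * (√3 - 1) / 4 := by
  rw [show π / 12 = π / 3 - π / 4 by ring, sin_sub, cos_pi_div_four, sin_pi_div_four,
    cos_pi_div_three, sin_pi_div_three]
  ring

theorem cos_five_pi_div_six : cos (5 * π / 6) = -(√3 / 2) := by
  rw [show 5 * π / 6 = π - π / 6 by ring, cos_pi_sub, cos_pi_div_six]

theorem sin_five_pi_div_six : sin (5 * π / 6) = 1 / 2 := by
  rw [show 5 * π / 6 = π - π / 6 by ring, sin_pi_sub, sin_pi_div_six]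

end Real

lemma arg_dodecagonal_tau : arg ((I + 1) * ((√3 : ℂ) - 1) / 2) = π / 4 := by
  have h3 : 1 < √3 := lt_sqrt_of_sq_lt (by norm_num)
  refine arg_eq_of_eq_mul_cos_add_sin_mul_I (r := (√3 - 1) * √2 / 2) (by positivity)
    ⟨by linarith [pi_pos], by linarith [pi_pos]⟩ ?_
  rw [cos_pi_div_four, sin_pi_div_four]
  apply Complex.ext <;> simp <;> ring_nf <;> simp only [sq_sqrt, Nat.ofNat_nonneg] <;> ring

lemma arg_dodecagonal_tau_add_one : arg ((I + 1) * ((√3 : ℂ) - 1) / 2 + 1) = π / 12 := by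
  refine arg_eq_of_eq_mul_cos_add_sin_mul_I (r := √2) (by positivity)
    ⟨by linarith [pi_pos], by linarith [pi_pos]⟩ ?_
  rw [cos_pi_div_twelve, sin_pi_div_twelve]
  apply Complex.ext <;> simp <;> ring_nf <;> simp only [sq_sqrt, Nat.ofNat_nonneg] <;> ring

lemma arg_dodecagonal_tau_sub_one : arg ((I + 1) * ((√3 : ℂ) - 1) / 2 - 1) = 5 * π / 6 := by
  have h3 : 1 < √3 := lt_sqrt_of_sq_lt (by norm_num)
  refine arg_eq_of_eq_mul_cos_add_sin_mul_I (r := √3 - 1) (by linarith)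
    ⟨by linarith [pi_pos], by linarith [pi_pos]⟩ ?_
  rw [cos_five_pi_div_six, sin_five_pi_div_six]
  apply Complex.ext <;> simp <;> nlinarith [sq_sqrt (show (0 : ℝ) ≤ 3 by norm_num)]

/-- Let `τ₁ = (i+1)(√3 − 1)/2`.  Then `arg τ₁ = π/4`, `arg (τ₁+1) = π/12`,
`arg (τ₁−1) = 5π/6`, and the four vectors `1, τ₁, τ₁+1, τ₁−1` form a rational
4-tuple: the argument of the ratio of any two of them is a rational multiple
of `π`. -/
theorem dodecagonal_four_tuple :
    ∀ τ₁ : ℂ, τ₁ = (Complex.I + 1) * ((Real.sqrt 3 : ℂ) - 1) / 2 →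
      Complex.arg τ₁ = Real.pi / 4 ∧
      Complex.arg (τ₁ + 1) = Real.pi / 12 ∧
      Complex.arg (τ₁ - 1) = 5 * Real.pi / 6 ∧
      ∀ u ∈ ({1, τ₁, τ₁ + 1, τ₁ - 1} : Set ℂ),
        ∀ v ∈ ({1, τ₁, τ₁ + 1, τ₁ - 1} : Set ℂ),
          ∃ q : ℚ, Complex.arg (v / u) = (q : ℝ) * Real.pi := by
  intro τ₁ hτ
  have h_tau : arg τ₁ = π / 4 := hτ ▸ arg_dodecagonal_tau
  have h_add : arg (τ₁ + 1) = π / 12 := hτ ▸ arg_dodecagonal_tau_add_one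
  have h_sub : arg (τ₁ - 1) = 5 * π / 6 := hτ ▸ arg_dodecagonal_tau_sub_one
  refine ⟨h_tau, h_add, h_sub, ?_⟩
  have h_rat : ∀ z ∈ ({1, τ₁, τ₁ + 1, τ₁ - 1} : Set ℂ), ∃ q : ℚ, arg z = q * π := by
    simp only [Set.mem_insert_iff, Set.mem_singleton_iff, forall_eq_or_imp, forall_eq]
    refine ⟨⟨0, by simp⟩, ⟨1 / 4, ?_⟩, ⟨1 / 12, ?_⟩, ⟨5 / 6, ?_⟩⟩
    · rw [h_tau]; push_cast; ring
    · rw [h_add]; push_cast; ring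
    · rw [h_sub]; push_cast; ring
  intro u hu v hv
  obtain ⟨qu, hqu⟩ := h_rat u hu
  obtain ⟨qv, hqv⟩ := h_rat v hv
  exact exists_rat_arg_div_eq_mul_pi hqu hqv
end
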